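/- arXiv:1905.01836 — 13 statements merged into one kernel-verified Lean document; each statement's English description precedes it below -/
import Mathlib

section
/- Let d ≥ 2 and let σ be a sign pattern of length d+1 with exactly one sign change (c = 1). Then for every integer k with 0 ≤ k ≤ ⌊(d−1)/2⌋, the sign pattern σ is realizable with the pair (1, d−1−2k). -/
open Polynomial

/-- A real polynomial `P` realizes the pair `(pos, neg)` if it has exactly `pos`
distinct positive roots and exactly `neg` distinct negative roots, all of them
simple, and no other real roots. -/
def realizesPair (P : Polynomial ℝ) (pos neg : ℕ) : Prop :=
  P.roots.Nodup ∧
  (P.roots.filter (fun x => 0 < x)).card = pos ∧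
  (P.roots.filter (fun x => x < 0)).card = neg ∧
  (0 : ℝ) ∉ P.roots

/-!
A sign pattern with one sign change is the sign of `j - μ` at position `j`, for a half-integer
`μ ∈ (0, d)`. The polynomial `(x + 1)^(d-1) (x - a)` with `a = μ / (d - μ)` has exactly this
sign pattern, because `j (d - μ) [x^j] = d C(d-1, j-1) (j - μ)` for `j ≥ 1`. Perturb it to
`∏_{i<n} (x + 1 + i t) · ((x + 1)^2 + t)^k · (x - a)` with `n = d - 1 - 2k`: the coefficients
depend polynomially on `t`, so the signs survive for small `t > 0`, while the real roots become
the `n` simple negative roots `-(1 + i t)` and the positive root `a`.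
-/

open Topology

theorem Fin.apply_eq_apply_of_forall_castSucc_eq_succ {α : Type*} {d : ℕ} (f : Fin (d + 1) → α)
    {i j : Fin (d + 1)} (hij : i ≤ j)
    (h : ∀ l : Fin d, i ≤ l.castSucc → l.succ ≤ j → f l.castSucc = f l.succ) : f i = f j := by
  induction j using Fin.induction with
  | zero => rw [Fin.le_zero_iff.1 hij]
  | succ l ih =>
    by_cases hil : i ≤ l.castSucc
    · exact (ih hil fun l' h₁ h₂ => h l' h₁ (h₂.trans Fin.castSucc_lt_succ.le)).trans
        (h l hil le_rfl)
    · rw [le_antisymm hij (not_lt.1 (Fin.le_castSucc_iff.not.1 hil))]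

theorem exists_pos_mul_sub_of_card_sign_changes_eq_one {d : ℕ} (σ : Fin (d + 1) → ℤ)
    (hσ : ∀ i, σ i = 1 ∨ σ i = -1) (hlead : σ (Fin.last d) = 1)
    (hc : (Finset.univ.filter (fun i : Fin d => σ i.castSucc ≠ σ i.succ)).card = 1) :
    ∃ μ : ℝ, 0 < μ ∧ μ < d ∧ ∀ j, 0 < (σ j : ℝ) * (j - μ) := by
  obtain ⟨i₀, hi₀⟩ := Finset.card_eq_one.1 hc
  have hchange : ∀ l, σ l.castSucc ≠ σ l.succ ↔ l = i₀ := fun l => by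
    simpa using Finset.ext_iff.1 hi₀ l
  have hright : ∀ j, i₀.succ ≤ j → σ j = 1 := fun j hj =>
    hlead ▸ Fin.apply_eq_apply_of_forall_castSucc_eq_succ σ (Fin.le_last j) fun l hl _ =>
      not_not.1 fun h => Fin.castSucc_lt_succ.not_ge (((hchange l).1 h ▸ hj).trans hl)
  have hleft : ∀ j, j ≤ i₀.castSucc → σ j = -1 := by
    intro j hj
    have hσi₀ : σ i₀.castSucc = -1 := (hσ _).resolve_left fun h =>
      (hchange i₀).2 rfl (h.trans (hright _ le_rfl).symm)
    rw [← hσi₀]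
    refine Fin.apply_eq_apply_of_forall_castSucc_eq_succ σ hj fun l _ hl =>
      not_not.1 fun h => ?_
    rw [(hchange l).1 h] at hl
    exact hl.not_gt Fin.castSucc_lt_succ
  refine ⟨i₀ + 1 / 2, by positivity, ?_, fun j => ?_⟩
  · have : (i₀ : ℝ) + 1 ≤ d := by exact_mod_cast i₀.isLt
    linarith
  rcases lt_or_ge j i₀.succ with hj | hj
  · have : (j : ℝ) ≤ i₀ := by exact_mod_cast Fin.le_castSucc_iff.2 hj
    rw [hleft j (Fin.le_castSucc_iff.2 hj)]
    push_cast
    linarith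
  · have : (i₀ : ℝ) + 1 ≤ j := by exact_mod_cast hj
    rw [hright j hj]
    push_cast
    linarith

theorem pos_sub_mul_coeff_X_add_one_pow_mul_X_sub_C {d : ℕ} {μ : ℝ} (hμ₀ : 0 < μ)
    (hμd : μ < d) {j : ℕ} (hj : j ≤ d) (hjμ : (j : ℝ) ≠ μ) :
    0 < (j - μ) * ((X + 1) ^ (d - 1) * (X - C (μ / (d - μ)))).coeff j := by
  have hdμ : 0 < (d : ℝ) - μ := sub_pos.2 hμd
  cases j with
  | zero =>
    simp only [mul_coeff_zero, coeff_X_add_one_pow, Nat.choose_zero_right, Nat.cast_one, one_mul,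
      coeff_sub, coeff_X_zero, coeff_C_zero, zero_sub, CharP.cast_eq_zero, neg_mul_neg]
    exact mul_pos hμ₀ (div_pos hμ₀ hdμ)
  | succ l =>
    rw [coeff_mul_X_sub_C, coeff_X_add_one_pow, coeff_X_add_one_pow]
    push_cast
    have hchoose : ((d - 1).choose (l + 1) : ℝ) * (l + 1) = (d - 1).choose l * (d - 1 - l) := by
      have := congrArg (Nat.cast : ℕ → ℝ) (Nat.choose_succ_right_eq (d - 1) l)
      push_cast [Nat.cast_sub (show l ≤ d - 1 by omega), Nat.cast_sub (show 1 ≤ d by omega)]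
        at this
      exact this
    have hcancel : (d - μ) * (μ / (d - μ)) = μ := mul_div_cancel₀ _ hdμ.ne'
    have key : (l + 1) * (d - μ) * ((d - 1).choose l - (d - 1).choose (l + 1) * (μ / (d - μ)))
        = d * (d - 1).choose l * (l + 1 - μ) := by
      linear_combination (-μ) * hchoose - (l + 1) * ((d - 1).choose (l + 1) : ℝ) * hcancel
    have hA : (0 : ℝ) < (d - 1).choose l := by exact_mod_cast Nat.choose_pos (by omega)
    have hne : (l + 1 : ℝ) - μ ≠ 0 := sub_ne_zero.2 (by exact_mod_cast hjμ)
    refine pos_of_mul_pos_right (a := (l + 1) * (d - μ)) ?_ (by positivity)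
    calc (0 : ℝ) < d * (d - 1).choose l * (l + 1 - μ) ^ 2 :=
        mul_pos (mul_pos (hμ₀.trans hμd) hA) (sq_pos_of_ne_zero hne)
      _ = _ := by linear_combination (μ - l - 1) * key

theorem eventually_forall_pos_mul_coeff_map_evalRingHom {ι : Type*} [Finite ι]
    (Q : ℝ[X][X]) (w : ι → ℝ) (e : ι → ℕ) {t₀ : ℝ}
    (h : ∀ i, 0 < w i * (Q.map (evalRingHom t₀)).coeff (e i)) :
    ∀ᶠ t in 𝓝 t₀, ∀ i, 0 < w i * (Q.map (evalRingHom t)).coeff (e i) := by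
  refine Filter.eventually_all.2 fun i => ?_
  have hcont : Continuous fun t => w i * (Q.map (evalRingHom t)).coeff (e i) := by
    simp only [coeff_map, coe_evalRingHom]
    fun_prop
  exact (hcont.tendsto t₀).eventually_const_lt (h i)

theorem realizesPair_prod_X_sub_C_mul_mul_X_sub_C {s : Finset ℝ} (hs : ∀ r ∈ s, r < 0)
    {q : ℝ[X]} (hq : ∀ x, q.eval x ≠ 0) {a : ℝ} (ha : 0 < a) :
    realizesPair ((∏ r ∈ s, (X - C r)) * q * (X - C a)) 1 s.card := by
  have hq₀ : q ≠ 0 := fun h => hq 0 (by simp [h])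
  have has : a ∉ s := fun h => (hs a h).not_gt ha
  have hqroots : q.roots = 0 :=
    Multiset.eq_zero_of_forall_notMem fun x hx => hq x (isRoot_of_mem_roots hx)
  have hsq : (∏ r ∈ s, (X - C r)) * q ≠ 0 :=
    mul_ne_zero (monic_prod_of_monic _ _ fun r _ => monic_X_sub_C r).ne_zero hq₀
  have hroots : ((∏ r ∈ s, (X - C r)) * q * (X - C a)).roots = (Finset.cons a s has).val := by
    rw [roots_mul (mul_ne_zero hsq (X_sub_C_ne_zero a)), roots_mul hsq, roots_prod_X_sub_C,
      roots_X_sub_C, hqroots, Finset.cons_val, add_zero, Multiset.add_comm,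
      Multiset.singleton_add]
  have hpos : s.val.filter (fun x => 0 < x) = 0 :=
    Multiset.filter_eq_nil.2 fun x hx => (hs x hx).not_gt
  have hneg : s.val.filter (fun x => x < 0) = s.val := Multiset.filter_eq_self.2 hs
  refine ⟨hroots ▸ (Finset.cons a s has).nodup, ?_, ?_, ?_⟩
  · rw [hroots, Finset.cons_val, Multiset.filter_cons_of_pos _ ha, hpos]
    rfl
  · rw [hroots, Finset.cons_val, Multiset.filter_cons_of_neg (p := (· < 0)) _ ha.not_gt, hneg]
    rfl
  · rw [hroots, Finset.cons_val, Multiset.mem_cons, not_or]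
    exact ⟨ha.ne, fun h => (hs 0 h).false⟩

noncomputable def perturbedPoly (n k : ℕ) (a t : ℝ) : ℝ[X] :=
  (∏ i ∈ Finset.range n, (X + C (1 + i * t))) * ((X + 1) ^ 2 + C t) ^ k * (X - C a)

theorem perturbedPoly_zero (n k : ℕ) (a : ℝ) :
    perturbedPoly n k a 0 = (X + 1) ^ (n + 2 * k) * (X - C a) := by
  simp [perturbedPoly, pow_add, pow_mul]

theorem perturbedPoly_monic_and_natDegree (n k : ℕ) (a t : ℝ) :
    (perturbedPoly n k a t).Monic ∧ (perturbedPoly n k a t).natDegree = n + 2 * k + 1 := by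
  have hprod : (∏ i ∈ Finset.range n, (X + C (1 + i * t))).Monic :=
    monic_prod_of_monic _ _ fun i _ => monic_X_add_C _
  have hq : ((X + 1 : ℝ[X]) ^ 2 + C t).Monic := by monicity!
  have hq₂ : ((X + 1 : ℝ[X]) ^ 2 + C t).natDegree = 2 := by compute_degree!
  refine ⟨(hprod.mul (hq.pow k)).mul (monic_X_sub_C a), ?_⟩
  rw [perturbedPoly, (hprod.mul (hq.pow k)).natDegree_mul (monic_X_sub_C a),
    hprod.natDegree_mul (hq.pow k), natDegree_prod_of_monic _ _ fun i _ => monic_X_add_C _,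
    hq.natDegree_pow, hq₂]
  simp only [natDegree_X_add_C, Finset.sum_const, Finset.card_range, smul_eq_mul, mul_one,
    natDegree_X_sub_C]
  ring

theorem exists_map_evalRingHom_eq_perturbedPoly (n k : ℕ) (a : ℝ) :
    ∃ Q : ℝ[X][X], ∀ t, Q.map (evalRingHom t) = perturbedPoly n k a t :=
  ⟨(∏ i ∈ Finset.range n, (X + C (1 + C (i : ℝ) * Polynomial.X))) *
      ((X + 1) ^ 2 + C Polynomial.X) ^ k * (X - C (C a)),
    fun t => by simp [perturbedPoly, Polynomial.map_prod]⟩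

theorem realizesPair_perturbedPoly (n k : ℕ) {a t : ℝ} (ha : 0 < a) (ht : 0 < t) :
    realizesPair (perturbedPoly n k a t) 1 n := by
  set s := (Finset.range n).image fun i : ℕ => -(1 + i * t)
  have hinj : Function.Injective fun i : ℕ => -(1 + i * t) := fun i j hij => by
    simpa [ht.ne'] using hij
  have hprod : ∏ i ∈ Finset.range n, (X + C (1 + i * t)) = ∏ r ∈ s, (X - C r) := by
    simp only [s, Finset.prod_image hinj.injOn, map_neg, sub_neg_eq_add]
  have hs : ∀ r ∈ s, r < 0 := by
    simp only [s, Finset.mem_image]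
    rintro _ ⟨i, -, rfl⟩
    have : 0 ≤ (i : ℝ) * t := by positivity
    linarith
  have hq : ∀ x, (((X + 1) ^ 2 + C t) ^ k : ℝ[X]).eval x ≠ 0 := fun x => by
    simp only [eval_pow, eval_add, eval_X, eval_one, eval_C]
    positivity
  have := realizesPair_prod_X_sub_C_mul_mul_X_sub_C hs hq ha
  rwa [Finset.card_image_of_injective _ hinj, Finset.card_range, ← hprod] at this

theorem stmt0_general (d : ℕ) (σ : Fin (d + 1) → ℤ)
    (hσ : ∀ i, σ i = 1 ∨ σ i = -1)
    (hlead : σ (Fin.last d) = 1)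
    (hc : (Finset.univ.filter (fun i : Fin d => σ i.castSucc ≠ σ i.succ)).card = 1)
    (k : ℕ) (hk : k ≤ (d - 1) / 2) :
    ∃ P : Polynomial ℝ, P.Monic ∧ P.natDegree = d ∧
      (∀ j : Fin (d + 1), 0 < (σ j : ℝ) * P.coeff (j : ℕ)) ∧
      realizesPair P 1 (d - 1 - 2 * k) := by
  obtain ⟨μ, hμ₀, hμd, hσμ⟩ := exists_pos_mul_sub_of_card_sign_changes_eq_one σ hσ hlead hc
  have hd : 0 < d := by exact_mod_cast hμ₀.trans hμd
  set a := μ / (d - μ)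
  obtain ⟨Q, hQ⟩ := exists_map_evalRingHom_eq_perturbedPoly (d - 1 - 2 * k) k a
  have hbase : ∀ j : Fin (d + 1), 0 < (σ j : ℝ) * (Q.map (evalRingHom 0)).coeff j := by
    intro j
    have hjμ : (j : ℝ) ≠ μ := fun h => by simpa [h] using hσμ j
    have hcoeff := pos_sub_mul_coeff_X_add_one_pow_mul_X_sub_C hμ₀ hμd (Fin.is_le j) hjμ
    rw [hQ, perturbedPoly_zero, show d - 1 - 2 * k + 2 * k = d - 1 by omega]
    refine pos_of_mul_pos_right (a := ((j : ℝ) - μ) ^ 2) ?_ (sq_nonneg _)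
    calc 0 < (σ j * (j - μ)) * ((j - μ) * _) := mul_pos (hσμ j) hcoeff
      _ = _ := by ring
  obtain ⟨t, hcoeff, ht⟩ :=
    (((eventually_forall_pos_mul_coeff_map_evalRingHom Q _ _ hbase).filter_mono
      nhdsWithin_le_nhds).and (self_mem_nhdsWithin (s := Set.Ioi 0))).exists
  obtain ⟨hmonic, hdeg⟩ := perturbedPoly_monic_and_natDegree (d - 1 - 2 * k) k a t
  refine ⟨perturbedPoly (d - 1 - 2 * k) k a t, hmonic, by omega, fun j => hQ t ▸ hcoeff j,
    realizesPair_perturbedPoly _ k (div_pos hμ₀ (sub_pos.2 hμd)) ht⟩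

/-- For `d ≥ 2`, any sign pattern (recorded as `σ j = ±1`, the sign of the
coefficient of `x^j`, with leading sign `+`) with exactly one sign change is
realizable with the pair `(1, d - 1 - 2k)` for every `k ≤ ⌊(d-1)/2⌋`. -/
theorem stmt0 (d : ℕ) (hd : 2 ≤ d) (σ : Fin (d + 1) → ℤ)
    (hσ : ∀ i, σ i = 1 ∨ σ i = -1)
    (hlead : σ (Fin.last d) = 1)
    (hc : (Finset.univ.filter (fun i : Fin d => σ i.castSucc ≠ σ i.succ)).card = 1)
    (k : ℕ) (hk : k ≤ (d - 1) / 2) :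
    ∃ P : Polynomial ℝ, P.Monic ∧ P.natDegree = d ∧
      (∀ j : Fin (d + 1), 0 < (σ j : ℝ) * P.coeff (j : ℕ)) ∧
      realizesPair P 1 (d - 1 - 2 * k) :=
  stmt0_general d σ hσ hlead hc k hk
end

section
/- For n = 1 and d ≥ 2, and for n = 2 and d ≥ 3, every sign pattern Σ_{m,n,q} (with m ≥ 1, q ≥ 1, m + n + q = d + 1) is realizable with the pair (0, d−2). -/
open Polynomial

/-- `P` is a monic real polynomial of degree `d` defining the sign pattern
`Σ_{m,n,q}` (with `m + n + q = d + 1`): `m` pluses, then `n` minuses, then `q`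
pluses; in coefficient indexing, `coeff j > 0` for `j < q`, `coeff j < 0` for
`q ≤ j < q + n`, and `coeff j > 0` for `q + n ≤ j ≤ d`. -/
def definesSigma (P : Polynomial ℝ) (d n q : ℕ) : Prop :=
  (∀ j, j < q → 0 < P.coeff j) ∧
  (∀ j, q ≤ j → j < q + n → P.coeff j < 0) ∧
  (∀ j, q + n ≤ j → j ≤ d → 0 < P.coeff j)

private lemma coeff_linmul (c : ℝ) (P : ℝ[X]) (j : ℕ) :
    ((X + C c) * P).coeff (j+1) = P.coeff j + c * P.coeff (j+1) := by
  simp [add_mul, coeff_X_mul, coeff_C_mul]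

private lemma coeff_linmul0 (c : ℝ) (P : ℝ[X]) :
    ((X + C c) * P).coeff 0 = c * P.coeff 0 := by
  simp [add_mul, mul_coeff_zero]

private lemma roots_linmul (c : ℝ) (P : ℝ[X]) (h : P ≠ 0) :
    ((X + C c) * P).roots = -c ::ₘ P.roots := by
  have hx : (X + C c : ℝ[X]) = X - C (-c) := by simp [sub_neg_eq_add]
  rw [hx, roots_mul (by rw [← hx]; simp [h, X_add_C_ne_zero]), roots_X_sub_C]
  rfl

private lemma realizes_step (P : ℝ[X]) (hP0 : P ≠ 0) (c : ℝ) (hc : 0 < c)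
    (hr : -c ∉ P.roots) (k : ℕ) (h : realizesPair P 0 k) :
    realizesPair ((X + C c) * P) 0 (k+1) := by
  obtain ⟨hnd, hpos, hneg, h0⟩ := h
  rw [realizesPair, roots_linmul c P hP0]
  refine ⟨Multiset.nodup_cons.2 ⟨hr, hnd⟩, ?_, ?_, ?_⟩
  · rw [Multiset.filter_cons_of_neg _ (by simp; linarith)]; exact hpos
  · rw [Multiset.filter_cons_of_pos _ (by simp [hc])]
    simp [hneg]
  · simp only [Multiset.mem_cons, not_or]
    exact ⟨by intro h; apply absurd h.symm (by simpa using hc.ne'), h0⟩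

/-- The realizability statement with the root-count `k` kept explicit. -/
def Good (d n q k : ℕ) : Prop :=
  ∃ P : Polynomial ℝ, P.Monic ∧ P.natDegree = d ∧
    definesSigma P d n q ∧ realizesPair P 0 k


private lemma step_small (d n q k : ℕ) (hn : 1 ≤ n) (hq : 1 ≤ q) (hqn : q + n ≤ d + 1)
    (h : Good d n q k) : Good (d+1) n (q+1) (k+1) := by
  obtain ⟨P, hM, hdeg, hσ, hreal⟩ := h
  have hqd : q ≤ d := by omega
  have hnz : ∀ j, j ≤ d → P.coeff j ≠ 0 := by
    intro j hj
    rcases lt_or_ge j q with h1 | h1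
    · exact (hσ.1 j h1).ne'
    rcases lt_or_ge j (q+n) with h2 | h2
    · exact (hσ.2.1 j h1 h2).ne
    · exact (hσ.2.2 j h2 hj).ne'
  set m₀ : ℝ := (Finset.range (d+1)).inf' (by simp) (fun j => |P.coeff j|) with hm₀
  set B : ℝ := (Finset.range (d+1)).sup' (by simp) (fun j => |P.coeff j|) with hB
  have hm₀pos : 0 < m₀ := by
    rw [hm₀, Finset.lt_inf'_iff]
    intro j hj
    exact abs_pos.2 (hnz j (by simpa using Nat.lt_succ_iff.mp (Finset.mem_range.mp hj)))
  have hm₀le : ∀ j, j ≤ d → m₀ ≤ |P.coeff j| := fun j hj =>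
    Finset.inf'_le _ (Finset.mem_range.mpr (Nat.lt_succ_of_le hj))
  have hBle : ∀ j, j ≤ d → |P.coeff j| ≤ B := fun j hj =>
    Finset.le_sup' (fun j => |P.coeff j|) (Finset.mem_range.mpr (Nat.lt_succ_of_le hj))
  have hB0 : 0 ≤ B := le_trans (abs_nonneg _) (hBle 0 (by omega))
  obtain ⟨ε, hεmem, hεbad⟩ := (Set.Ioo_infinite (show (0:ℝ) < m₀/(1+B) by positivity)).exists_notMem_finset
    (P.roots.toFinset.image (fun x => -x))
  obtain ⟨hε0, hεlt⟩ := hεmem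
  have hεroot : -ε ∉ P.roots := by
    intro hmem
    exact hεbad (Finset.mem_image.mpr ⟨-ε, Multiset.mem_toFinset.mpr hmem, by ring⟩)
  -- the key bound
  have hkey : ∀ i, i ≤ d → |ε * P.coeff (i+1)| < |P.coeff i| := by
    intro i hi
    rcases le_or_gt (i+1) d with h1 | h1
    · calc |ε * P.coeff (i+1)| = ε * |P.coeff (i+1)| := by rw [abs_mul, abs_of_pos hε0]
        _ ≤ ε * B := by nlinarith [hBle (i+1) h1]
        _ < m₀ := by
          rw [lt_div_iff₀ (by positivity)] at hεlt
          nlinarith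
        _ ≤ |P.coeff i| := hm₀le i hi
    · have : P.coeff (i+1) = 0 := coeff_eq_zero_of_natDegree_lt (by omega)
      rw [this, mul_zero, abs_zero]
      exact abs_pos.2 (hnz i hi)
  have hsignpos : ∀ i, i ≤ d → 0 < P.coeff i → 0 < ((X + C ε) * P).coeff (i+1) := by
    intro i hi hp
    rw [coeff_linmul]
    have h1 := hkey i hi
    have h2 : -(ε * P.coeff (i+1)) ≤ |ε * P.coeff (i+1)| := neg_le_abs _
    rw [abs_of_pos hp] at h1
    linarith
  have hsignneg : ∀ i, i ≤ d → P.coeff i < 0 → ((X + C ε) * P).coeff (i+1) < 0 := by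
    intro i hi hp
    rw [coeff_linmul]
    have h1 := hkey i hi
    have h2 : ε * P.coeff (i+1) ≤ |ε * P.coeff (i+1)| := le_abs_self _
    rw [abs_of_neg hp] at h1
    linarith
  refine ⟨(X + C ε) * P, (monic_X_add_C ε).mul hM, ?_, ⟨?_, ?_, ?_⟩, ?_⟩
  · rw [(monic_X_add_C ε).natDegree_mul hM, natDegree_X_add_C, hdeg]; omega
  · intro j hj
    rcases j with _ | i
    · rw [coeff_linmul0]
      exact mul_pos hε0 (hσ.1 0 (by omega))
    · exact hsignpos i (by omega) (hσ.1 i (by omega))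
  · intro j h1 h2
    rcases j with _ | i
    · omega
    · exact hsignneg i (by omega) (hσ.2.1 i (by omega) (by omega))
  · intro j h1 h2
    rcases j with _ | i
    · omega
    · exact hsignpos i (by omega) (hσ.2.2 i (by omega) (by omega))
  · exact realizes_step P hM.ne_zero ε hε0 hεroot k hreal

private lemma step_large (d n q k : ℕ) (hn : 1 ≤ n) (hq : 1 ≤ q) (hqn : q + n ≤ d + 1)
    (h : Good d n q k) : Good (d+1) n q (k+1) := by
  obtain ⟨P, hM, hdeg, hσ, hreal⟩ := h
  have hqd : q ≤ d := by omega
  have hnz : ∀ j, j ≤ d → P.coeff j ≠ 0 := by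
    intro j hj
    rcases lt_or_ge j q with h1 | h1
    · exact (hσ.1 j h1).ne'
    rcases lt_or_ge j (q+n) with h2 | h2
    · exact (hσ.2.1 j h1 h2).ne
    · exact (hσ.2.2 j h2 hj).ne'
  set m₀ : ℝ := (Finset.range (d+1)).inf' (by simp) (fun j => |P.coeff j|) with hm₀
  set B : ℝ := (Finset.range (d+1)).sup' (by simp) (fun j => |P.coeff j|) with hB
  have hm₀pos : 0 < m₀ := by
    rw [hm₀, Finset.lt_inf'_iff]
    intro j hj
    exact abs_pos.2 (hnz j (by simpa using Nat.lt_succ_iff.mp (Finset.mem_range.mp hj)))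
  have hm₀le : ∀ j, j ≤ d → m₀ ≤ |P.coeff j| := fun j hj =>
    Finset.inf'_le _ (Finset.mem_range.mpr (Nat.lt_succ_of_le hj))
  have hBle : ∀ j, j ≤ d → |P.coeff j| ≤ B := fun j hj =>
    Finset.le_sup' (fun j => |P.coeff j|) (Finset.mem_range.mpr (Nat.lt_succ_of_le hj))
  have hB0 : 0 ≤ B := le_trans (abs_nonneg _) (hBle 0 (by omega))
  obtain ⟨M, hMmem, hMbad⟩ := (Set.Ioi_infinite ((1+B)/m₀)).exists_notMem_finset
    (P.roots.toFinset.image (fun x => -x))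
  rw [Set.mem_Ioi] at hMmem
  have hM0 : 0 < M := lt_trans (by positivity) hMmem
  have hMroot : -M ∉ P.roots := by
    intro hmem
    exact hMbad (Finset.mem_image.mpr ⟨-M, Multiset.mem_toFinset.mpr hmem, by ring⟩)
  -- key bound: for i+1 ≤ d, |coeff i| < M * |coeff (i+1)|
  have hkey : ∀ i, i + 1 ≤ d → |P.coeff i| < |M * P.coeff (i+1)| := by
    intro i hi
    calc |P.coeff i| ≤ B := hBle i (by omega)
      _ < 1 + B := by linarith
      _ ≤ M * m₀ := by rw [div_lt_iff₀ hm₀pos] at hMmem; linarith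
      _ ≤ M * |P.coeff (i+1)| := by nlinarith [hm₀le (i+1) hi]
      _ = |M * P.coeff (i+1)| := by rw [abs_mul, abs_of_pos hM0]
  have hsignpos : ∀ i, i + 1 ≤ d → 0 < P.coeff (i+1) → 0 < ((X + C M) * P).coeff (i+1) := by
    intro i hi hp
    rw [coeff_linmul]
    have h1 := hkey i hi
    have h2 : -(P.coeff i) ≤ |P.coeff i| := neg_le_abs _
    rw [abs_mul, abs_of_pos hM0, abs_of_pos hp] at h1
    nlinarith
  have hsignneg : ∀ i, i + 1 ≤ d → P.coeff (i+1) < 0 → ((X + C M) * P).coeff (i+1) < 0 := by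
    intro i hi hp
    rw [coeff_linmul]
    have h1 := hkey i hi
    have h2 : P.coeff i ≤ |P.coeff i| := le_abs_self _
    rw [abs_mul, abs_of_pos hM0, abs_of_neg hp] at h1
    nlinarith
  have htop : ((X + C M) * P).coeff (d+1) = 1 := by
    have hz : P.coeff (d+1) = 0 := coeff_eq_zero_of_natDegree_lt (by omega)
    rw [coeff_linmul, hz, mul_zero, add_zero, ← hdeg]
    exact hM.coeff_natDegree
  refine ⟨(X + C M) * P, (monic_X_add_C M).mul hM, ?_, ⟨?_, ?_, ?_⟩, ?_⟩
  · rw [(monic_X_add_C M).natDegree_mul hM, natDegree_X_add_C, hdeg]; omega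
  · intro j hj
    rcases j with _ | i
    · rw [coeff_linmul0]
      exact mul_pos hM0 (hσ.1 0 (by omega))
    · exact hsignpos i (by omega) (hσ.1 (i+1) hj)
  · intro j h1 h2
    rcases j with _ | i
    · omega
    · exact hsignneg i (by omega) (hσ.2.1 (i+1) h1 h2)
  · intro j h1 h2
    rcases Nat.lt_or_ge j (d+1) with h3 | h3
    · rcases j with _ | i
      · omega
      · exact hsignpos i (by omega) (hσ.2.2 (i+1) h1 (by omega))
    · have : j = d + 1 := by omega
      rw [this, htop]; norm_num
  · exact realizes_step P hM.ne_zero M hM0 hMroot k hreal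

private lemma base1 : Good 2 1 1 0 := by
  have hM : (X^2 - X + C 1 : ℝ[X]).Monic := by monicity!
  have hroots : (X^2 - X + C 1 : ℝ[X]).roots = 0 := by
    apply Multiset.eq_zero_of_forall_notMem
    intro x hx
    rw [mem_roots hM.ne_zero] at hx
    simp only [IsRoot, eval_add, eval_sub, eval_pow, eval_X, eval_C] at hx
    nlinarith [sq_nonneg (x - 1/2)]
  have h0 : (X^2 - X + C 1 : ℝ[X]).coeff 0 = 1 := by norm_num
  have h1 : (X^2 - X + C 1 : ℝ[X]).coeff 1 = -1 := by norm_num [coeff_one]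
  have h2 : (X^2 - X + C 1 : ℝ[X]).coeff 2 = 1 := by norm_num [coeff_one, coeff_X]
  refine ⟨X^2 - X + C 1, hM, by compute_degree!, ⟨?_, ?_, ?_⟩, ?_⟩
  · intro j hj; interval_cases j; rw [h0]; norm_num
  · intro j hj1 hj2; interval_cases j; rw [h1]; norm_num
  · intro j hj1 hj2; interval_cases j; rw [h2]; norm_num
  · exact ⟨by rw [hroots]; exact Multiset.nodup_zero, by rw [hroots]; rfl,
      by rw [hroots]; rfl, by rw [hroots]; simp⟩

private lemma base2 : Good 3 2 1 1 := by
  have hQM : (X^2 - C 3 * X + C 3 : ℝ[X]).Monic := by monicity!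
  have hQroots : (X^2 - C 3 * X + C 3 : ℝ[X]).roots = 0 := by
    apply Multiset.eq_zero_of_forall_notMem
    intro x hx
    rw [mem_roots hQM.ne_zero] at hx
    simp only [IsRoot, eval_add, eval_sub, eval_pow, eval_mul, eval_X, eval_C] at hx
    nlinarith [sq_nonneg (2*x - 3)]
  have hroots : ((X + C 2) * (X^2 - C 3 * X + C 3) : ℝ[X]).roots = {-2} := by
    rw [roots_linmul 2 _ hQM.ne_zero, hQroots]
    rfl
  have hQ0 : (X^2 - C 3 * X + C 3 : ℝ[X]).coeff 0 = 3 := by norm_num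
  have hQ1 : (X^2 - C 3 * X + C 3 : ℝ[X]).coeff 1 = -3 := by norm_num
  have hQ2 : (X^2 - C 3 * X + C 3 : ℝ[X]).coeff 2 = 1 := by norm_num
  have hQ3 : (X^2 - C 3 * X + C 3 : ℝ[X]).coeff 3 = 0 := by norm_num
  have hc0 : ((X + C 2) * (X^2 - C 3 * X + C 3) : ℝ[X]).coeff 0 = 6 := by
    rw [coeff_linmul0, hQ0]; norm_num
  have hc1 : ((X + C 2) * (X^2 - C 3 * X + C 3) : ℝ[X]).coeff 1 = -3 := by
    have h := coeff_linmul 2 (X^2 - C 3 * X + C 3) 0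
    rw [hQ0, hQ1] at h; simp only [show (0 + 1:ℕ) = 1 from rfl] at h; rw [h]; norm_num
  have hc2 : ((X + C 2) * (X^2 - C 3 * X + C 3) : ℝ[X]).coeff 2 = -1 := by
    have h := coeff_linmul 2 (X^2 - C 3 * X + C 3) 1
    rw [hQ1, hQ2] at h; simp only [show (1 + 1:ℕ) = 2 from rfl] at h; rw [h]; norm_num
  have hc3 : ((X + C 2) * (X^2 - C 3 * X + C 3) : ℝ[X]).coeff 3 = 1 := by
    have h := coeff_linmul 2 (X^2 - C 3 * X + C 3) 2
    rw [hQ2, hQ3] at h; simp only [show (2 + 1:ℕ) = 3 from rfl] at h; rw [h]; norm_num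
  refine ⟨(X + C 2) * (X^2 - C 3 * X + C 3), (monic_X_add_C 2).mul hQM, ?_, ⟨?_, ?_, ?_⟩, ?_⟩
  · rw [(monic_X_add_C 2).natDegree_mul hQM, natDegree_X_add_C]
    have : (X^2 - C 3 * X + C 3 : ℝ[X]).natDegree = 2 := by compute_degree!
    omega
  · intro j hj; interval_cases j; rw [hc0]; norm_num
  · intro j h1 h2
    interval_cases j
    · rw [hc1]; norm_num
    · rw [hc2]; norm_num
  · intro j h1 h2; interval_cases j; rw [hc3]; norm_num
  · refine ⟨by rw [hroots]; simp, ?_, ?_, ?_⟩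
    · rw [hroots, Multiset.filter_singleton]; norm_num
    · rw [hroots, Multiset.filter_singleton]; norm_num
    · rw [hroots]; norm_num

private lemma chainA (n : ℕ) (hn : 1 ≤ n) (base : Good (n+1) n 1 (n-1)) :
    ∀ j, Good (n+1+j) n (1+j) (n-1+j) := by
  intro j
  induction j with
  | zero => exact base
  | succ j ih => exact step_small (n+1+j) n (1+j) (n-1+j) hn (by omega) (by omega) ih

private lemma chainB (n : ℕ) (hn : 1 ≤ n) (base : Good (n+1) n 1 (n-1)) :
    ∀ i j, Good (n+1+j+i) n (1+j) (n-1+j+i) := by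
  intro i
  induction i with
  | zero => exact chainA n hn base
  | succ i ih =>
      intro j
      exact step_large (n+1+j+i) n (1+j) (n-1+j+i) hn (by omega) (by omega) (ih j)

private lemma chainC (n m q d k : ℕ) (hn : 1 ≤ n) (hm : 1 ≤ m) (hq : 1 ≤ q)
    (hd : m + n + q = d + 1) (hk : k + 2 = d) (base : Good (n+1) n 1 (n-1)) :
    Good d n q k := by
  have h := chainB n hn base (m-1) (q-1)
  have e1 : n+1+(q-1)+(m-1) = d := by omega
  have e2 : 1+(q-1) = q := by omega
  have e3 : n-1+(q-1)+(m-1) = k := by omega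
  rw [e1, e2, e3] at h
  exact h

/-- For `n = 1`, `d ≥ 2`, and for `n = 2`, `d ≥ 3`, any sign pattern
`Σ_{m,n,q}` is realizable with the pair `(0, d - 2)`. -/
theorem stmt2 (d m n q : ℕ) (hm : 1 ≤ m) (hq : 1 ≤ q)
    (hsum : m + n + q = d + 1)
    (h : (n = 1 ∧ 2 ≤ d) ∨ (n = 2 ∧ 3 ≤ d)) :
    ∃ P : Polynomial ℝ, P.Monic ∧ P.natDegree = d ∧
      definesSigma P d n q ∧ realizesPair P 0 (d - 2) := by
  have key : Good d n q (d-2) := by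
    rcases h with ⟨rfl, hd⟩ | ⟨rfl, hd⟩
    · exact chainC 1 m q d (d-2) le_rfl hm hq hsum (by omega) base1
    · exact chainC 2 m q d (d-2) (by omega) hm hq hsum (by omega) base2
  exact key
end

section
/- For n = 3 and d ≥ 5, every sign pattern Σ_{m,3,q} (with m ≥ 1, q ≥ 1, m + 3 + q = d + 1) is realizable with the pair (0, d−2). -/
open Polynomial

namespace Stmt3Aux

lemma coeff_step_zero (t : ℝ) (P : Polynomial ℝ) :
    ((X + C t) * P).coeff 0 = t * P.coeff 0 := by
  rw [add_mul, coeff_add, mul_coeff_zero, coeff_X_zero, mul_coeff_zero, coeff_C]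
  simp

lemma coeff_step_succ (t : ℝ) (P : Polynomial ℝ) (j : ℕ) :
    ((X + C t) * P).coeff (j + 1) = P.coeff j + t * P.coeff (j + 1) := by
  rw [add_mul, coeff_add, coeff_X_mul, coeff_C_mul]

lemma roots_step (t : ℝ) (P : Polynomial ℝ) (hP : P ≠ 0) :
    ((X + C t) * P).roots = -t ::ₘ P.roots := by
  have hX : (X + C t : Polynomial ℝ) ≠ 0 := (monic_X_add_C t).ne_zero
  rw [roots_mul (mul_ne_zero hX hP)]
  have : (X + C t : Polynomial ℝ) = X - C (-t) := by rw [map_neg, sub_neg_eq_add]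
  rw [this, roots_X_sub_C, Multiset.singleton_add]

lemma realizes_step (P : Polynomial ℝ) (neg : ℕ) (t : ℝ) (ht : 0 < t) (hP : P ≠ 0)
    (hroot : -t ∉ P.roots) (hreal : realizesPair P 0 neg) :
    realizesPair ((X + C t) * P) 0 (neg + 1) := by
  obtain ⟨hnd, hpos, hneg, h0⟩ := hreal
  rw [realizesPair, roots_step t P hP]
  refine ⟨Multiset.nodup_cons.mpr ⟨hroot, hnd⟩, ?_, ?_, ?_⟩
  · rw [Multiset.filter_cons_of_neg _ (by simp [not_lt]; linarith)]
    exact hpos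
  · rw [Multiset.filter_cons_of_pos _ (by simpa using ht), Multiset.card_cons, hneg]
  · rw [Multiset.mem_cons]
    push_neg
    exact ⟨by intro h; rw [h] at ht; simp at ht; linarith [ht], h0⟩

lemma sigma_step_small (P : Polynomial ℝ) (d q : ℕ) (hq : 1 ≤ q) (hqd : q + 3 ≤ d)
    (hP : P.Monic) (hdeg : P.natDegree = d) (hσ : definesSigma P d 3 q) :
    ∃ ε0 : ℝ, 0 < ε0 ∧ ∀ t : ℝ, 0 < t → t < ε0 →
      definesSigma ((X + C t) * P) (d + 1) 3 (q + 1) := by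
  obtain ⟨h1, h2, h3⟩ := hσ
  have hnz : ∀ j, j ≤ d → P.coeff j ≠ 0 := by
    intro j hj
    rcases lt_or_ge j q with h | h
    · exact (h1 j h).ne'
    rcases lt_or_ge j (q + 3) with h' | h'
    · exact (h2 j h h').ne
    · exact (h3 j h' hj).ne'
  have hSne : (Finset.range (d + 1)).Nonempty := ⟨0, Finset.mem_range.mpr (Nat.succ_pos d)⟩
  set m0 := (Finset.range (d + 1)).inf' hSne (fun j => |P.coeff j|) with hm0def
  set M := (Finset.range (d + 1)).sup' hSne (fun j => |P.coeff j|) with hMdef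
  have hm0 : 0 < m0 := by
    rw [hm0def, Finset.lt_inf'_iff]
    intro j hj
    exact abs_pos.mpr (hnz j (Nat.lt_succ_iff.mp (Finset.mem_range.mp hj)))
  have hm0le : ∀ j, j ≤ d → m0 ≤ |P.coeff j| := fun j hj =>
    Finset.inf'_le _ (Finset.mem_range.mpr (Nat.lt_succ_of_le hj))
  have hM0le : ∀ j, j ≤ d → |P.coeff j| ≤ M := fun j hj =>
    Finset.le_sup' (fun i => |P.coeff i|) (Finset.mem_range.mpr (Nat.lt_succ_of_le hj))
  have hMpos : 0 < M := lt_of_lt_of_le hm0 (le_trans (hm0le 0 (Nat.zero_le d)) (hM0le 0 (Nat.zero_le d)))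
  have hM : ∀ j, |P.coeff j| ≤ M := by
    intro j
    rcases le_or_gt j d with h | h
    · exact hM0le j h
    · rw [coeff_eq_zero_of_natDegree_lt (hdeg ▸ h)]
      simpa using hMpos.le
  refine ⟨m0 / M, by positivity, ?_⟩
  intro t ht htlt
  have key : ∀ j k, j ≤ d → |t * P.coeff k| < |P.coeff j| := by
    intro j k hj
    rw [abs_mul, abs_of_pos ht]
    calc t * |P.coeff k| ≤ t * M := mul_le_mul_of_nonneg_left (hM k) ht.le
      _ < m0 := (lt_div_iff₀ hMpos).mp htlt
      _ ≤ |P.coeff j| := hm0le j hj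
  have hpos : ∀ j k, j ≤ d → 0 < P.coeff j → 0 < P.coeff j + t * P.coeff k := by
    intro j k hj h
    have habs := key j k hj
    rw [abs_of_pos h] at habs
    have := neg_abs_le (t * P.coeff k)
    linarith
  have hneg : ∀ j k, j ≤ d → P.coeff j < 0 → P.coeff j + t * P.coeff k < 0 := by
    intro j k hj h
    have habs := key j k hj
    rw [abs_of_neg h] at habs
    have := le_abs_self (t * P.coeff k)
    linarith
  refine ⟨?_, ?_, ?_⟩
  · intro j hj
    match j with
    | 0 =>
      rw [coeff_step_zero]
      exact mul_pos ht (h1 0 hq)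
    | (i + 1) =>
      rw [coeff_step_succ]
      exact hpos i (i + 1) (by omega) (h1 i (by omega))
  · intro j hj1 hj2
    obtain ⟨i, rfl⟩ : ∃ i, j = i + 1 := ⟨j - 1, by omega⟩
    rw [coeff_step_succ]
    exact hneg i (i + 1) (by omega) (h2 i (by omega) (by omega))
  · intro j hj1 hj2
    obtain ⟨i, rfl⟩ : ∃ i, j = i + 1 := ⟨j - 1, by omega⟩
    rw [coeff_step_succ]
    exact hpos i (i + 1) (by omega) (h3 i (by omega) (by omega))

lemma sigma_step_large (P : Polynomial ℝ) (d q : ℕ) (hq : 1 ≤ q) (hqd : q + 3 ≤ d)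
    (hP : P.Monic) (hdeg : P.natDegree = d) (hσ : definesSigma P d 3 q) :
    ∃ T0 : ℝ, 0 < T0 ∧ ∀ t : ℝ, T0 < t →
      definesSigma ((X + C t) * P) (d + 1) 3 q := by
  obtain ⟨h1, h2, h3⟩ := hσ
  have hnz : ∀ j, j ≤ d → P.coeff j ≠ 0 := by
    intro j hj
    rcases lt_or_ge j q with h | h
    · exact (h1 j h).ne'
    rcases lt_or_ge j (q + 3) with h' | h'
    · exact (h2 j h h').ne
    · exact (h3 j h' hj).ne'
  have hSne : (Finset.range (d + 1)).Nonempty := ⟨0, Finset.mem_range.mpr (Nat.succ_pos d)⟩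
  set m0 := (Finset.range (d + 1)).inf' hSne (fun j => |P.coeff j|) with hm0def
  set M := (Finset.range (d + 1)).sup' hSne (fun j => |P.coeff j|) with hMdef
  have hm0 : 0 < m0 := by
    rw [hm0def, Finset.lt_inf'_iff]
    intro j hj
    exact abs_pos.mpr (hnz j (Nat.lt_succ_iff.mp (Finset.mem_range.mp hj)))
  have hm0le : ∀ j, j ≤ d → m0 ≤ |P.coeff j| := fun j hj =>
    Finset.inf'_le _ (Finset.mem_range.mpr (Nat.lt_succ_of_le hj))
  have hM0le : ∀ j, j ≤ d → |P.coeff j| ≤ M := fun j hj =>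
    Finset.le_sup' (fun i => |P.coeff i|) (Finset.mem_range.mpr (Nat.lt_succ_of_le hj))
  have hMpos : 0 < M := lt_of_lt_of_le hm0 (le_trans (hm0le 0 (Nat.zero_le d)) (hM0le 0 (Nat.zero_le d)))
  have hM : ∀ j, |P.coeff j| ≤ M := by
    intro j
    rcases le_or_gt j d with h | h
    · exact hM0le j h
    · rw [coeff_eq_zero_of_natDegree_lt (hdeg ▸ h)]
      simpa using hMpos.le
  refine ⟨M / m0, by positivity, ?_⟩
  intro t htlt
  have ht : 0 < t := lt_trans (by positivity) htlt
  have key : ∀ j k, k ≤ d → |P.coeff j| < t * |P.coeff k| := by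
    intro j k hk
    calc |P.coeff j| ≤ M := hM j
      _ < t * m0 := by
          have := (div_lt_iff₀ hm0).mp htlt
          linarith
      _ ≤ t * |P.coeff k| := mul_le_mul_of_nonneg_left (hm0le k hk) ht.le
  have hpos : ∀ j k, k ≤ d → 0 < P.coeff k → 0 < P.coeff j + t * P.coeff k := by
    intro j k hk h
    have habs := key j k hk
    rw [abs_of_pos h] at habs
    have := neg_abs_le (P.coeff j)
    linarith
  have hneg : ∀ j k, k ≤ d → P.coeff k < 0 → P.coeff j + t * P.coeff k < 0 := by
    intro j k hk h
    have habs := key j k hk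
    rw [abs_of_neg h] at habs
    have := le_abs_self (P.coeff j)
    linarith
  refine ⟨?_, ?_, ?_⟩
  · intro j hj
    match j with
    | 0 =>
      rw [coeff_step_zero]
      exact mul_pos ht (h1 0 hq)
    | (i + 1) =>
      rw [coeff_step_succ]
      exact hpos i (i + 1) (by omega) (h1 (i + 1) hj)
  · intro j hj1 hj2
    obtain ⟨i, rfl⟩ : ∃ i, j = i + 1 := ⟨j - 1, by omega⟩
    rw [coeff_step_succ]
    exact hneg i (i + 1) (by omega) (h2 (i + 1) hj1 hj2)
  · intro j hj1 hj2
    rcases Nat.lt_or_ge j (d + 1) with hjd | hjd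
    · obtain ⟨i, rfl⟩ : ∃ i, j = i + 1 := ⟨j - 1, by omega⟩
      rw [coeff_step_succ]
      exact hpos i (i + 1) (by omega) (h3 (i + 1) hj1 (by omega))
    · have hj : j = d + 1 := by omega
      subst hj
      rw [coeff_step_succ, coeff_eq_zero_of_natDegree_lt (by omega : P.natDegree < d + 1)]
      rw [show P.coeff d = 1 from hdeg ▸ hP.coeff_natDegree]
      norm_num

/-- choose a valid t in an interval, avoiding negatives of roots -/
lemma exists_t_small (P : Polynomial ℝ) (ε0 : ℝ) (hε : 0 < ε0) :
    ∃ t : ℝ, 0 < t ∧ t < ε0 ∧ -t ∉ P.roots := by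
  obtain ⟨t, ht, hnt⟩ := (Set.Ioo_infinite hε).exists_notMem_finset
    (P.roots.toFinset.image (fun x => -x))
  refine ⟨t, ht.1, ht.2, fun hmem => hnt ?_⟩
  exact Finset.mem_image.mpr ⟨-t, Multiset.mem_toFinset.mpr hmem, by ring⟩

lemma exists_t_large (P : Polynomial ℝ) (T0 : ℝ) :
    ∃ t : ℝ, T0 < t ∧ -t ∉ P.roots := by
  obtain ⟨t, ht, hnt⟩ := (Set.Ioi_infinite T0).exists_notMem_finset
    (P.roots.toFinset.image (fun x => -x))
  refine ⟨t, ht, fun hmem => hnt ?_⟩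
  exact Finset.mem_image.mpr ⟨-t, Multiset.mem_toFinset.mpr hmem, by ring⟩

lemma base_case (a b : ℝ) (hab : a ^ 2 < 4 * b) :
    ∃ P : Polynomial ℝ, P.Monic ∧ P.natDegree = 5 ∧ realizesPair P 0 3 ∧
      P.coeff 0 = 6 * b ∧ P.coeff 1 = 11 * b - 6 * a ∧ P.coeff 2 = 6 - 11 * a + 6 * b ∧
      P.coeff 3 = 11 - 6 * a + b ∧ P.coeff 4 = 6 - a ∧ P.coeff 5 = 1 := by
  set Qd : Polynomial ℝ := X ^ 2 - C a * X + C b with hQd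
  set P : Polynomial ℝ := (X - C (-1)) * ((X - C (-2)) * ((X - C (-3)) * Qd)) with hPdef
  have hQdMonic : Qd.Monic := by rw [hQd]; monicity!
  have hQdRoots : Qd.roots = 0 := by
    rw [Multiset.eq_zero_iff_forall_notMem]
    intro x hx
    have hx' : eval x Qd = 0 := (mem_roots'.mp hx).2
    rw [hQd] at hx'
    simp only [eval_add, eval_sub, eval_mul, eval_pow, eval_X, eval_C] at hx'
    nlinarith [sq_nonneg (x - a / 2)]
  have hMonic : P.Monic :=
    ((monic_X_sub_C (-1:ℝ)).mul (((monic_X_sub_C (-2:ℝ))).mul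
      ((monic_X_sub_C (-3:ℝ)).mul hQdMonic)))
  have hdeg : P.natDegree = 5 := by
    rw [hPdef, (monic_X_sub_C (-1:ℝ)).natDegree_mul ((monic_X_sub_C (-2:ℝ)).mul
      ((monic_X_sub_C (-3:ℝ)).mul hQdMonic)),
      (monic_X_sub_C (-2:ℝ)).natDegree_mul ((monic_X_sub_C (-3:ℝ)).mul hQdMonic),
      (monic_X_sub_C (-3:ℝ)).natDegree_mul hQdMonic, natDegree_X_sub_C, natDegree_X_sub_C,
      natDegree_X_sub_C]
    have h2 : Qd.natDegree = 2 := by rw [hQd]; compute_degree!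
    rw [h2]
  have hroots : P.roots = {-1, -2, -3} := by
    rw [hPdef,
      roots_mul (mul_ne_zero (X_sub_C_ne_zero (-1:ℝ)) (mul_ne_zero (X_sub_C_ne_zero (-2:ℝ))
        (mul_ne_zero (X_sub_C_ne_zero (-3:ℝ)) hQdMonic.ne_zero))),
      roots_mul (mul_ne_zero (X_sub_C_ne_zero (-2:ℝ))
        (mul_ne_zero (X_sub_C_ne_zero (-3:ℝ)) hQdMonic.ne_zero)),
      roots_mul (mul_ne_zero (X_sub_C_ne_zero (-3:ℝ)) hQdMonic.ne_zero),
      roots_X_sub_C, roots_X_sub_C, roots_X_sub_C, hQdRoots]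
    rfl
  have hexp : P = X ^ 5 + C (6 - a) * X ^ 4 + C (11 - 6 * a + b) * X ^ 3 +
      C (6 - 11 * a + 6 * b) * X ^ 2 + C (11 * b - 6 * a) * X + C (6 * b) := by
    rw [hPdef, hQd]
    simp only [map_sub, map_add, map_mul, map_ofNat, map_one, map_neg]
    ring
  refine ⟨P, hMonic, hdeg, ?_, ?_, ?_, ?_, ?_, ?_, ?_⟩
  · refine ⟨?_, ?_, ?_, ?_⟩
    · rw [hroots]
      simp only [Multiset.insert_eq_cons, Multiset.nodup_cons, Multiset.mem_cons,
        Multiset.mem_singleton, Multiset.nodup_singleton]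
      norm_num
    · rw [hroots]
      rw [show ({-1, -2, -3} : Multiset ℝ) = -1 ::ₘ -2 ::ₘ {-3} from rfl]
      rw [Multiset.filter_cons_of_neg _ (by norm_num), Multiset.filter_cons_of_neg _ (by norm_num),
        Multiset.filter_singleton]
      norm_num
    · rw [hroots]
      rw [show ({-1, -2, -3} : Multiset ℝ) = -1 ::ₘ -2 ::ₘ {-3} from rfl]
      rw [Multiset.filter_cons_of_pos _ (by norm_num), Multiset.filter_cons_of_pos _ (by norm_num),
        Multiset.filter_singleton]
      norm_num
    · rw [hroots]
      simp only [Multiset.insert_eq_cons, Multiset.mem_cons, Multiset.mem_singleton]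
      norm_num
  all_goals
    rw [hexp]
    simp only [coeff_add, coeff_C_mul, coeff_X_pow, coeff_C, coeff_X]
    norm_num

/-- The inductive engine. -/
lemma main (k : ℕ) : ∀ m q : ℕ, 1 ≤ m → 1 ≤ q → m + 3 + q = (5 + k) + 1 →
    ∃ P : Polynomial ℝ, P.Monic ∧ P.natDegree = 5 + k ∧
      definesSigma P (5 + k) 3 q ∧ realizesPair P 0 (3 + k) := by
  induction k with
  | zero =>
    intro m q hm hq hsum
    have hqle : q ≤ 2 := by omega
    interval_cases q
    · -- q = 1
      obtain ⟨P, hMonic, hdeg, hreal, hc0, hc1, hc2, hc3, hc4, hc5⟩ :=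
        base_case (21/10 : ℝ) (28/25 : ℝ) (by norm_num)
      refine ⟨P, hMonic, hdeg, ⟨?_, ?_, ?_⟩, hreal⟩
      · intro j hj
        interval_cases j
        rw [hc0]; norm_num
      · intro j hj1 hj2
        interval_cases j
        · rw [hc1]; norm_num
        · rw [hc2]; norm_num
        · rw [hc3]; norm_num
      · intro j hj1 hj2
        interval_cases j
        · rw [hc4]; norm_num
        · rw [hc5]; norm_num
    · -- q = 2
      obtain ⟨P, hMonic, hdeg, hreal, hc0, hc1, hc2, hc3, hc4, hc5⟩ :=
        base_case (13/2 : ℝ) (107/10 : ℝ) (by norm_num)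
      refine ⟨P, hMonic, hdeg, ⟨?_, ?_, ?_⟩, hreal⟩
      · intro j hj
        interval_cases j
        · rw [hc0]; norm_num
        · rw [hc1]; norm_num
      · intro j hj1 hj2
        interval_cases j
        · rw [hc2]; norm_num
        · rw [hc3]; norm_num
        · rw [hc4]; norm_num
      · intro j hj1 hj2
        interval_cases j
        rw [hc5]; norm_num
  | succ k ih =>
    intro m q hm hq hsum
    rcases Nat.lt_or_ge 1 q with hq2 | hq1
    · -- q ≥ 2 : small-root step from (m, q-1)
      obtain ⟨P, hMonic, hdeg, hσ, hreal⟩ := ih m (q - 1) hm (by omega) (by omega)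
      obtain ⟨ε0, hε0, hstep⟩ := sigma_step_small P (5 + k) (q - 1) (by omega) (by omega)
        hMonic hdeg hσ
      obtain ⟨t, ht0, htε, hroot⟩ := exists_t_small P ε0 hε0
      refine ⟨(X + C t) * P, (monic_X_add_C t).mul hMonic, ?_, ?_, ?_⟩
      · rw [(monic_X_add_C t).natDegree_mul hMonic, natDegree_X_add_C, hdeg]
        omega
      · have := hstep t ht0 htε
        rwa [show q - 1 + 1 = q by omega, show 5 + k + 1 = 5 + (k + 1) by omega] at this
      · have := realizes_step P (3 + k) t ht0 hMonic.ne_zero hroot hreal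
        rwa [show 3 + k + 1 = 3 + (k + 1) by omega] at this
    · -- q = 1 : large-root step from (m-1, q)
      obtain ⟨P, hMonic, hdeg, hσ, hreal⟩ := ih (m - 1) q (by omega) hq (by omega)
      obtain ⟨T0, hT0, hstep⟩ := sigma_step_large P (5 + k) q hq (by omega) hMonic hdeg hσ
      obtain ⟨t, htT, hroot⟩ := exists_t_large P T0
      have ht0 : 0 < t := lt_trans hT0 htT
      refine ⟨(X + C t) * P, (monic_X_add_C t).mul hMonic, ?_, ?_, ?_⟩
      · rw [(monic_X_add_C t).natDegree_mul hMonic, natDegree_X_add_C, hdeg]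
        omega
      · have := hstep t htT
        rwa [show 5 + k + 1 = 5 + (k + 1) by omega] at this
      · have := realizes_step P (3 + k) t ht0 hMonic.ne_zero hroot hreal
        rwa [show 3 + k + 1 = 3 + (k + 1) by omega] at this

end Stmt3Aux

/-- For `n = 3` and `d ≥ 5`, any sign pattern `Σ_{m,3,q}` is realizable with
the pair `(0, d - 2)`. -/
theorem stmt3 (d m q : ℕ) (hm : 1 ≤ m) (hq : 1 ≤ q) (hd : 5 ≤ d)
    (hsum : m + 3 + q = d + 1) :
    ∃ P : Polynomial ℝ, P.Monic ∧ P.natDegree = d ∧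
      definesSigma P d 3 q ∧ realizesPair P 0 (d - 2) := by
  obtain ⟨k, rfl⟩ : ∃ k, d = 5 + k := ⟨d - 5, by omega⟩
  have := Stmt3Aux.main k m q hm hq hsum
  rwa [show 5 + k - 2 = 3 + k by omega]
end

section
/- For d = 4, the sign pattern Σ_{1,3,1} = (+,−,−,−,+) is not realizable with the pair (0, 2); that is, there is no monic real polynomial x^4 + a_3x^3 + a_2x^2 + a_1x + a_0 with a_3, a_2, a_1 < 0, a_0 > 0, having exactly two distinct negative roots, both simple, and no other real roots. -/
open Polynomial

lemma quad_repr (Q : Polynomial ℝ) (h2 : Q.natDegree = 2) (hm : Q.Monic) :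
    Q = X^2 + C (Q.coeff 1) * X + C (Q.coeff 0) := by
  have h2' : Q.coeff 2 = 1 := by
    have := hm
    rwa [Polynomial.Monic, Polynomial.leadingCoeff, h2] at this
  ext n
  rcases n with _|_|_|n
  · simp
  · simp [coeff_X]
  · simp [coeff_X_pow, h2', coeff_C]
  · have hlt : Q.natDegree < n+3 := by omega
    simp [coeff_eq_zero_of_natDegree_lt hlt, coeff_X_pow, coeff_C, coeff_X]

/-- For `d = 4`, the sign pattern `Σ_{1,3,1} = (+,−,−,−,+)` is not realizable
with the pair `(0, 2)`. -/
theorem stmt4 :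
    ¬ ∃ P : Polynomial ℝ, P.Monic ∧ P.natDegree = 4 ∧
      P.coeff 3 < 0 ∧ P.coeff 2 < 0 ∧ P.coeff 1 < 0 ∧ 0 < P.coeff 0 ∧
      realizesPair P 0 2 := by
  rintro ⟨P, hM, hdeg, h3, h2c, h1, h0, hrp⟩
  obtain ⟨hnd, hpos, hneg, h0r⟩ := hrp
  have hPne : P ≠ 0 := hM.ne_zero
  -- all roots are negative
  have hallneg : ∀ x ∈ P.roots, x < 0 := by
    intro x hx
    rcases lt_trichotomy x 0 with h | h | h
    · exact h
    · exact absurd (h ▸ hx) h0r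
    · have : x ∈ P.roots.filter (fun x => 0 < x) := Multiset.mem_filter.2 ⟨hx, h⟩
      rw [Multiset.card_eq_zero.1 hpos] at this
      exact absurd this (Multiset.notMem_zero x)
  have hfil : P.roots.filter (fun x => x < 0) = P.roots :=
    Multiset.filter_eq_self.2 hallneg
  have hcard : P.roots.card = 2 := by rw [← hfil]; exact hneg
  obtain ⟨a, b, hab⟩ := Multiset.card_eq_two.1 hcard
  have ha : a < 0 := hallneg a (by rw [hab]; simp)
  have hb : b < 0 := hallneg b (by rw [hab]; simp)
  have hane : a ≠ b := by
    rw [hab] at hnd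
    simpa [Multiset.nodup_cons] using hnd
  -- factor out the roots
  have hdvd : ((P.roots.map fun r => X - C r).prod) ∣ P :=
    prod_multiset_X_sub_C_dvd P
  rw [hab] at hdvd
  simp only [Multiset.insert_eq_cons, Multiset.map_cons, Multiset.map_singleton,
    Multiset.prod_cons, Multiset.prod_singleton] at hdvd
  obtain ⟨Q, hPQ⟩ := hdvd
  have hMm : ((X - C a) * (X - C b)).Monic := (monic_X_sub_C a).mul (monic_X_sub_C b)
  have hQm : Q.Monic := hMm.of_mul_monic_left (hPQ ▸ hM)
  have hQne : Q ≠ 0 := hQm.ne_zero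
  have hMdeg : ((X - C a) * (X - C b)).natDegree = 2 := by
    rw [natDegree_mul (X_sub_C_ne_zero a) (X_sub_C_ne_zero b),
      natDegree_X_sub_C, natDegree_X_sub_C]
  have hQdeg : Q.natDegree = 2 := by
    have := hMm.natDegree_mul hQm
    rw [← hPQ, hdeg, hMdeg] at this
    omega
  -- Q has no real roots
  have hQroots : Q.roots = 0 := by
    have hr : P.roots = ((X - C a) * (X - C b)).roots + Q.roots := by
      rw [hPQ, roots_mul (hPQ ▸ hPne)]
    have hMr : ((X - C a) * (X - C b)).roots.card = 2 := by
      rw [roots_mul (mul_ne_zero (X_sub_C_ne_zero a) (X_sub_C_ne_zero b)),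
        roots_X_sub_C, roots_X_sub_C]
      simp
    have := congrArg Multiset.card hr
    rw [hcard, Multiset.card_add, hMr] at this
    exact Multiset.card_eq_zero.1 (by omega)
  have hQnoroot : ∀ x : ℝ, Q.eval x ≠ 0 := by
    intro x hx
    have : x ∈ Q.roots := (mem_roots hQne).2 hx
    rw [hQroots] at this
    exact Multiset.notMem_zero x this
  set t := Q.coeff 1 with ht
  set c := Q.coeff 0 with hc
  have hQeq : Q = X^2 + C t * X + C c := quad_repr Q hQdeg hQm
  -- negative discriminant
  have hdisc : t^2 < 4 * c := by
    by_contra hcon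
    push_neg at hcon
    have hnn : (0:ℝ) ≤ t^2 - 4*c := by linarith
    set r := Real.sqrt (t^2 - 4*c) with hrdef
    have hr2 : r^2 = t^2 - 4*c := Real.sq_sqrt hnn
    apply hQnoroot ((-t + r)/2)
    rw [hQeq]
    simp only [eval_add, eval_mul, eval_pow, eval_X, eval_C]
    linear_combination hr2 / 4
  -- explicit coefficients of P
  have hPE : P = X^4 + C (t - a - b) * X^3 + C (c - (a+b)*t + a*b) * X^2
      + C (a*b*t - (a+b)*c) * X + C (a*b*c) := by
    rw [hPQ, hQeq]
    simp only [C_sub, C_add, C_mul]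
    ring
  have hc3 : P.coeff 3 = t - a - b := by
    rw [hPE]
    simp only [coeff_add, coeff_C_mul, coeff_X_pow, coeff_X, coeff_C]
    norm_num
  have hc1 : P.coeff 1 = a*b*t - (a+b)*c := by
    rw [hPE]
    simp only [coeff_add, coeff_C_mul, coeff_X_pow, coeff_X, coeff_C]
    norm_num
  rw [hc3] at h3
  rw [hc1] at h1
  -- final contradiction
  have habne : a - b ≠ 0 := sub_ne_zero.2 hane
  have hsq : 0 < (a-b)^2 := by positivity
  have hdisc2 : 4 * (a*b) < (a+b)^2 := by nlinarith [hsq]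
  have hσ : 0 < -(a+b) := by linarith
  have htneg : 0 < -t := by linarith
  nlinarith [mul_pos hσ htneg, mul_nonneg htneg.le (sq_nonneg (a-b)),
    mul_pos hσ (by linarith : (0:ℝ) < 4*c - t^2),
    mul_pos (mul_pos hσ htneg) (by linarith : (0:ℝ) < -t - (-(a+b)))]
end

section
/- For n = 4, the sign pattern Σ_{m,4,q} (with m + 4 + q = d + 1) is realizable with the pair (0, d−2) if either (q ≥ 3, m ≥ 3 and d ≥ 10) or (m = 2 and q ≥ 6). -/
open Polynomial

noncomputable def sqQuad (a b : ℝ) : Polynomial ℝ := X ^ 2 - C a * X + C b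

lemma sqQuad_eq (a b : ℝ) : sqQuad a b = X ^ 2 + (C (-a) * X + C b) := by
  simp only [sqQuad, map_neg]; ring

lemma sqQuad_monic (a b : ℝ) : (sqQuad a b).Monic := by
  rw [sqQuad_eq]
  exact monic_X_pow_add (lt_of_le_of_lt degree_linear_le (by norm_num))

lemma sqQuad_natDegree (a b : ℝ) : (sqQuad a b).natDegree = 2 := by
  rw [sqQuad_eq]
  apply natDegree_eq_of_degree_eq_some
  rw [degree_add_eq_left_of_degree_lt, degree_X_pow]
  rw [degree_X_pow]
  exact lt_of_le_of_lt degree_linear_le (by norm_num)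

lemma sqQuad_roots (a b : ℝ) (hab : a ^ 2 < 4 * b) : (sqQuad a b).roots = 0 := by
  apply Multiset.eq_zero_of_forall_notMem
  intro x hx
  have hx' := isRoot_of_mem_roots hx
  have hev : eval x (sqQuad a b) = x ^ 2 - a * x + b := by simp [sqQuad]
  rw [IsRoot, hev] at hx'
  nlinarith [sq_nonneg (2 * x - a)]

noncomputable def linProd (rs : List ℝ) : Polynomial ℝ := (rs.map fun r => X + C r).prod

@[simp] lemma linProd_nil : linProd [] = 1 := rfl

@[simp] lemma linProd_cons (r : ℝ) (rs : List ℝ) :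
    linProd (r :: rs) = (X + C r) * linProd rs := by
  simp [linProd]

lemma linProd_monic (rs : List ℝ) : (linProd rs).Monic := by
  induction rs with
  | nil => simp only [linProd_nil]; exact monic_one
  | cons r rs ih => rw [linProd_cons]; exact (monic_X_add_C r).mul ih

lemma linProd_natDegree (rs : List ℝ) : (linProd rs).natDegree = rs.length := by
  induction rs with
  | nil => simp [monic_one.natDegree_eq_zero]
  | cons r rs ih =>
    rw [linProd_cons, (monic_X_add_C r).natDegree_mul (linProd_monic rs), ih,
      natDegree_X_add_C, List.length_cons]
    omega

lemma roots_X_add_C' (r : ℝ) : (X + C r).roots = {-r} := by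
  rw [show (X + C r : Polynomial ℝ) = X - C (-r) by rw [map_neg, sub_neg_eq_add],
    roots_X_sub_C]

lemma linProd_roots (rs : List ℝ) : (linProd rs).roots = ↑(rs.map fun r => -r) := by
  induction rs with
  | nil => simp
  | cons r rs ih =>
    rw [linProd_cons,
      roots_mul (mul_ne_zero (monic_X_add_C r).ne_zero (linProd_monic rs).ne_zero),
      roots_X_add_C', ih, List.map_cons]
    simp

lemma factored_props (rs : List ℝ) (a b : ℝ) (hab : a ^ 2 < 4 * b)
    (hpos : ∀ r ∈ rs, 0 < r) (hnd : rs.Nodup) :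
    (linProd rs * sqQuad a b).Monic ∧ (linProd rs * sqQuad a b).natDegree = rs.length + 2 ∧
      realizesPair (linProd rs * sqQuad a b) 0 rs.length := by
  have hm := (linProd_monic rs).mul (sqQuad_monic a b)
  have hroots : (linProd rs * sqQuad a b).roots = ↑(rs.map fun r => -r) := by
    rw [roots_mul (mul_ne_zero (linProd_monic rs).ne_zero (sqQuad_monic a b).ne_zero),
      sqQuad_roots a b hab, linProd_roots, add_zero]
  have hall : ∀ x ∈ (↑(rs.map fun r => -r) : Multiset ℝ), x < 0 := by
    intro x hx
    rw [Multiset.mem_coe, List.mem_map] at hx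
    obtain ⟨r, hr, rfl⟩ := hx
    have := hpos r hr; linarith
  refine ⟨hm, ?_, ?_, ?_, ?_, ?_⟩
  · rw [(linProd_monic rs).natDegree_mul (sqQuad_monic a b), linProd_natDegree,
      sqQuad_natDegree]
  · rw [hroots, Multiset.coe_nodup]
    exact hnd.map neg_injective
  · rw [hroots, Multiset.card_eq_zero, Multiset.filter_eq_nil]
    intro x hx
    have := hall x hx; intro h; linarith
  · rw [hroots, Multiset.filter_eq_self.mpr hall, Multiset.coe_card, List.length_map]
  · rw [hroots]
    intro h
    have := hall 0 h; linarith


lemma coeff_linmul_zero (r : ℝ) (P : Polynomial ℝ) :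
    ((X + C r) * P).coeff 0 = r * P.coeff 0 := by
  rw [mul_coeff_zero]
  simp

lemma coeff_linmul_succ (r : ℝ) (P : Polynomial ℝ) (k : ℕ) :
    ((X + C r) * P).coeff (k + 1) = P.coeff k + r * P.coeff (k + 1) := by
  rw [add_mul, coeff_add, coeff_X_mul, coeff_C_mul]

lemma exists_eps (P : Polynomial ℝ) (d : ℕ) (hc : ∀ j, j ≤ d → P.coeff j ≠ 0)
    (hneg : ∀ r ∈ P.roots, r < 0) :
    ∃ ε : ℝ, 0 < ε ∧ (∀ j, 1 ≤ j → j ≤ d → ε * |P.coeff j| < |P.coeff (j - 1)|) ∧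
      -ε ∉ P.roots := by
  classical
  set F : Finset ℝ :=
    insert 1 (((Finset.Icc 1 d).image fun j => |P.coeff (j - 1)| / |P.coeff j|) ∪
      P.roots.toFinset.image fun r => -r) with hF
  have hFpos : ∀ x ∈ F, 0 < x := by
    intro x hx
    rcases Finset.mem_insert.mp hx with rfl | hx
    · norm_num
    rcases Finset.mem_union.mp hx with hx | hx
    · obtain ⟨j, hj, rfl⟩ := Finset.mem_image.mp hx
      rw [Finset.mem_Icc] at hj
      exact div_pos (abs_pos.mpr (hc _ (by omega))) (abs_pos.mpr (hc _ hj.2))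
    · obtain ⟨r, hr, rfl⟩ := Finset.mem_image.mp hx
      have := hneg r (Multiset.mem_toFinset.mp hr); linarith
  have hne : F.Nonempty := ⟨1, Finset.mem_insert_self _ _⟩
  have hmpos : 0 < F.min' hne := hFpos _ (F.min'_mem hne)
  refine ⟨F.min' hne / 2, by linarith, ?_, ?_⟩
  · intro j h1 h2
    have hmem : |P.coeff (j - 1)| / |P.coeff j| ∈ F := by
      apply Finset.mem_insert_of_mem
      exact Finset.mem_union_left _
        (Finset.mem_image.mpr ⟨j, Finset.mem_Icc.mpr ⟨h1, h2⟩, rfl⟩)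
    have hle := Finset.min'_le _ _ hmem
    have hcj : (0:ℝ) < |P.coeff j| := abs_pos.mpr (hc _ h2)
    have : F.min' hne / 2 < |P.coeff (j - 1)| / |P.coeff j| := by linarith
    calc F.min' hne / 2 * |P.coeff j| < |P.coeff (j - 1)| / |P.coeff j| * |P.coeff j| := by
          exact mul_lt_mul_of_pos_right this hcj
      _ = |P.coeff (j - 1)| := by field_simp
  · intro hmem
    have h1 : -(-(F.min' hne / 2)) ∈ F := by
      apply Finset.mem_insert_of_mem
      exact Finset.mem_union_right _
        (Finset.mem_image.mpr ⟨-(F.min' hne / 2), Multiset.mem_toFinset.mpr hmem, rfl⟩)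
    have h2 := Finset.min'_le _ _ h1
    simp only [neg_neg] at h2
    linarith

lemma exists_R (P : Polynomial ℝ) (d : ℕ) (hc : ∀ j, j ≤ d → P.coeff j ≠ 0) :
    ∃ R : ℝ, 0 < R ∧ (∀ j, 1 ≤ j → j ≤ d → |P.coeff (j - 1)| < R * |P.coeff j|) ∧
      -R ∉ P.roots := by
  classical
  set F : Finset ℝ :=
    insert 1 (((Finset.Icc 1 d).image fun j => |P.coeff (j - 1)| / |P.coeff j|) ∪
      P.roots.toFinset.image fun r => -r) with hF
  have hne : F.Nonempty := ⟨1, Finset.mem_insert_self _ _⟩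
  have h1F : (1:ℝ) ≤ F.max' hne := Finset.le_max' _ _ (Finset.mem_insert_self _ _)
  refine ⟨F.max' hne + 1, by linarith, ?_, ?_⟩
  · intro j h1 h2
    have hmem : |P.coeff (j - 1)| / |P.coeff j| ∈ F := by
      apply Finset.mem_insert_of_mem
      exact Finset.mem_union_left _
        (Finset.mem_image.mpr ⟨j, Finset.mem_Icc.mpr ⟨h1, h2⟩, rfl⟩)
    have hle := Finset.le_max' _ _ hmem
    have hcj : (0:ℝ) < |P.coeff j| := abs_pos.mpr (hc _ h2)
    have hlt : |P.coeff (j - 1)| / |P.coeff j| < F.max' hne + 1 := by linarith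
    calc |P.coeff (j - 1)| = |P.coeff (j - 1)| / |P.coeff j| * |P.coeff j| := by field_simp
      _ < (F.max' hne + 1) * |P.coeff j| := mul_lt_mul_of_pos_right hlt hcj
  · intro hmem
    have h1 : -(-(F.max' hne + 1)) ∈ F := by
      apply Finset.mem_insert_of_mem
      exact Finset.mem_union_right _
        (Finset.mem_image.mpr ⟨-(F.max' hne + 1), Multiset.mem_toFinset.mpr hmem, rfl⟩)
    have h2 := Finset.le_max' _ _ h1
    simp only [neg_neg] at h2
    linarith

lemma sigma_coeff_ne (P : Polynomial ℝ) (d q : ℕ)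
    (hsig : definesSigma P d 4 q) : ∀ j, j ≤ d → P.coeff j ≠ 0 := by
  obtain ⟨hs1, hs2, hs3⟩ := hsig
  intro j hj
  rcases lt_or_ge j q with h | h
  · exact ne_of_gt (hs1 j h)
  rcases lt_or_ge j (q + 4) with h' | h'
  · exact ne_of_lt (hs2 j h h')
  · exact ne_of_gt (hs3 j h' hj)

lemma pair_roots_neg (P : Polynomial ℝ) (n : ℕ) (hrp : realizesPair P 0 n) :
    ∀ r ∈ P.roots, r < 0 := by
  obtain ⟨hnd, hp0, hpn, h0⟩ := hrp
  intro r hr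
  rcases lt_trichotomy r 0 with h | h | h
  · exact h
  · exact absurd (h ▸ hr) h0
  · exfalso
    have hmem : r ∈ P.roots.filter (fun x => 0 < x) := Multiset.mem_filter.mpr ⟨hr, h⟩
    rw [Multiset.card_eq_zero.mp hp0] at hmem
    exact Multiset.notMem_zero r hmem

lemma pair_step (P : Polynomial ℝ) (n : ℕ) (t : ℝ) (ht : 0 < t) (hroot : -t ∉ P.roots)
    (hm : P.Monic) (hrp : realizesPair P 0 n) :
    realizesPair ((X + C t) * P) 0 (n + 1) := by
  obtain ⟨hnd, hp0, hpn, h0⟩ := hrp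
  have hR : ((X + C t) * P).roots = -t ::ₘ P.roots := by
    rw [roots_mul (mul_ne_zero (monic_X_add_C t).ne_zero hm.ne_zero), roots_X_add_C',
      Multiset.singleton_add]
  refine ⟨?_, ?_, ?_, ?_⟩
  · rw [hR, Multiset.nodup_cons]; exact ⟨hroot, hnd⟩
  · rw [hR, Multiset.filter_cons_of_neg _ (by simp; linarith)]; exact hp0
  · rw [hR, Multiset.filter_cons_of_pos _ (by simp; linarith), Multiset.card_cons, hpn]
  · rw [hR, Multiset.mem_cons]
    push_neg
    exact ⟨by intro h; rw [h] at ht; simp at ht; linarith, h0⟩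

lemma stepQ_poly (P : Polynomial ℝ) (d q : ℕ) (hq : 1 ≤ q) (hqd : q + 4 ≤ d)
    (hm : P.Monic) (hdeg : P.natDegree = d)
    (hsig : definesSigma P d 4 q) (hrp : realizesPair P 0 (d - 2)) :
    ∃ Q : Polynomial ℝ, Q.Monic ∧ Q.natDegree = d + 1 ∧
      definesSigma Q (d + 1) 4 (q + 1) ∧ realizesPair Q 0 (d + 1 - 2) := by
  have hc := sigma_coeff_ne P d q hsig
  have hneg := pair_roots_neg P (d - 2) hrp
  obtain ⟨hs1, hs2, hs3⟩ := hsig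
  obtain ⟨ε, hε, hsmall, hroot⟩ := exists_eps P d hc hneg
  have hcoeffd1 : P.coeff (d + 1) = 0 :=
    coeff_eq_zero_of_natDegree_lt (by rw [hdeg]; omega)
  -- uniform sign transfer
  have key : ∀ k, k + 1 ≤ d →
      (0 < P.coeff k → 0 < ((X + C ε) * P).coeff (k + 1)) ∧
      (P.coeff k < 0 → ((X + C ε) * P).coeff (k + 1) < 0) := by
    intro k hk
    rw [coeff_linmul_succ]
    have hsm := hsmall (k + 1) (by omega) hk
    simp only [Nat.add_sub_cancel] at hsm
    constructor
    · intro hpos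
      rw [abs_of_pos hpos] at hsm
      have h1 : -|P.coeff (k+1)| ≤ P.coeff (k+1) := neg_abs_le _
      nlinarith [abs_nonneg (P.coeff (k+1))]
    · intro hneg'
      rw [abs_of_neg hneg'] at hsm
      have h1 : P.coeff (k+1) ≤ |P.coeff (k+1)| := le_abs_self _
      nlinarith [abs_nonneg (P.coeff (k+1))]
  refine ⟨(X + C ε) * P, (monic_X_add_C ε).mul hm, ?_, ⟨?_, ?_, ?_⟩, ?_⟩
  · rw [(monic_X_add_C ε).natDegree_mul hm, natDegree_X_add_C, hdeg]
    omega
  · -- j < q + 1 : positive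
    intro j hj
    cases j with
    | zero => rw [coeff_linmul_zero]; exact mul_pos hε (hs1 0 (by omega))
    | succ k => exact (key k (by omega)).1 (hs1 k (by omega))
  · -- q + 1 ≤ j < q + 5 : negative
    intro j hj1 hj2
    cases j with
    | zero => omega
    | succ k => exact (key k (by omega)).2 (hs2 k (by omega) (by omega))
  · -- q + 5 ≤ j ≤ d + 1 : positive
    intro j hj1 hj2
    cases j with
    | zero => omega
    | succ k =>
      rcases lt_or_ge k d with hkd | hkd
      · exact (key k (by omega)).1 (hs3 k (by omega) (by omega))
      · rw [show k + 1 = d + 1 from by omega, coeff_linmul_succ, hcoeffd1, mul_zero,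
          add_zero]
        exact hs3 d (by omega) le_rfl
  · have := pair_step P (d - 2) ε hε hroot hm hrp
    have he : d - 2 + 1 = d + 1 - 2 := by omega
    rwa [he] at this

lemma stepM_poly (P : Polynomial ℝ) (d q : ℕ) (hq : 1 ≤ q) (hqd : q + 4 ≤ d)
    (hm : P.Monic) (hdeg : P.natDegree = d)
    (hsig : definesSigma P d 4 q) (hrp : realizesPair P 0 (d - 2)) :
    ∃ Q : Polynomial ℝ, Q.Monic ∧ Q.natDegree = d + 1 ∧
      definesSigma Q (d + 1) 4 q ∧ realizesPair Q 0 (d + 1 - 2) := by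
  have hc := sigma_coeff_ne P d q hsig
  have hneg := pair_roots_neg P (d - 2) hrp
  obtain ⟨hs1, hs2, hs3⟩ := hsig
  obtain ⟨R, hR, hbig, hroot⟩ := exists_R P d hc
  have hcoeffd1 : P.coeff (d + 1) = 0 :=
    coeff_eq_zero_of_natDegree_lt (by rw [hdeg]; omega)
  have key : ∀ k, k + 1 ≤ d →
      (0 < P.coeff (k + 1) → 0 < ((X + C R) * P).coeff (k + 1)) ∧
      (P.coeff (k + 1) < 0 → ((X + C R) * P).coeff (k + 1) < 0) := by
    intro k hk
    rw [coeff_linmul_succ]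
    have hb := hbig (k + 1) (by omega) hk
    simp only [Nat.add_sub_cancel] at hb
    constructor
    · intro hpos
      rw [abs_of_pos hpos] at hb
      have h1 : -|P.coeff k| ≤ P.coeff k := neg_abs_le _
      nlinarith [abs_nonneg (P.coeff k)]
    · intro hneg'
      rw [abs_of_neg hneg'] at hb
      have h1 : P.coeff k ≤ |P.coeff k| := le_abs_self _
      nlinarith [abs_nonneg (P.coeff k)]
  refine ⟨(X + C R) * P, (monic_X_add_C R).mul hm, ?_, ⟨?_, ?_, ?_⟩, ?_⟩
  · rw [(monic_X_add_C R).natDegree_mul hm, natDegree_X_add_C, hdeg]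
    omega
  · intro j hj
    cases j with
    | zero => rw [coeff_linmul_zero]; exact mul_pos hR (hs1 0 (by omega))
    | succ k => exact (key k (by omega)).1 (hs1 (k + 1) hj)
  · intro j hj1 hj2
    cases j with
    | zero => omega
    | succ k => exact (key k (by omega)).2 (hs2 (k + 1) hj1 (by omega))
  · intro j hj1 hj2
    cases j with
    | zero => omega
    | succ k =>
      rcases lt_or_ge k d with hkd | hkd
      · exact (key k (by omega)).1 (hs3 (k + 1) (by omega) (by omega))
      · rw [show k + 1 = d + 1 from by omega, coeff_linmul_succ, hcoeffd1, mul_zero,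
          add_zero]
        exact hs3 d (by omega) le_rfl
  · have hroot' : -R ∉ P.roots := hroot
    have := pair_step P (d - 2) R hR hroot' hm hrp
    have he : d - 2 + 1 = d + 1 - 2 := by omega
    rwa [he] at this

def GoodMQ (m q : ℕ) : Prop :=
  ∃ P : Polynomial ℝ, P.Monic ∧ P.natDegree = m + q + 3 ∧
    definesSigma P (m + q + 3) 4 q ∧ realizesPair P 0 (m + q + 1)

lemma GoodMQ.stepQ {m q : ℕ} (hm : 1 ≤ m) (hq : 1 ≤ q) (h : GoodMQ m q) :
    GoodMQ m (q + 1) := by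
  obtain ⟨P, h1, h2, h3, h4⟩ := h
  have h4' : realizesPair P 0 (m + q + 3 - 2) := by
    have : m + q + 3 - 2 = m + q + 1 := by omega
    rwa [this]
  obtain ⟨Q, g1, g2, g3, g4⟩ := stepQ_poly P (m + q + 3) q hq (by omega) h1 h2 h3 h4'
  refine ⟨Q, g1, by rw [g2]; omega, ?_, ?_⟩
  · have : m + (q + 1) + 3 = m + q + 3 + 1 := by omega
    rwa [this]
  · have : m + (q + 1) + 1 = m + q + 3 + 1 - 2 := by omega
    rwa [this]

lemma GoodMQ.stepM {m q : ℕ} (hm : 1 ≤ m) (hq : 1 ≤ q) (h : GoodMQ m q) :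
    GoodMQ (m + 1) q := by
  obtain ⟨P, h1, h2, h3, h4⟩ := h
  have h4' : realizesPair P 0 (m + q + 3 - 2) := by
    have : m + q + 3 - 2 = m + q + 1 := by omega
    rwa [this]
  obtain ⟨Q, g1, g2, g3, g4⟩ := stepM_poly P (m + q + 3) q hq (by omega) h1 h2 h3 h4'
  refine ⟨Q, g1, by rw [g2]; omega, ?_, ?_⟩
  · have : m + 1 + q + 3 = m + q + 3 + 1 := by omega
    rwa [this]
  · have : m + 1 + q + 1 = m + q + 3 + 1 - 2 := by omega
    rwa [this]

lemma GoodMQ.iterQ {m q : ℕ} (hm : 1 ≤ m) (hq : 1 ≤ q) (h : GoodMQ m q) :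
    ∀ k, GoodMQ m (q + k) := by
  intro k
  induction k with
  | zero => exact h
  | succ n ih => exact GoodMQ.stepQ hm (le_trans hq (Nat.le_add_right q n)) ih

lemma GoodMQ.iterM {m q : ℕ} (hm : 1 ≤ m) (hq : 1 ≤ q) (h : GoodMQ m q) :
    ∀ k, GoodMQ (m + k) q := by
  intro k
  induction k with
  | zero => exact h
  | succ n ih => exact GoodMQ.stepM (le_trans hm (Nat.le_add_right m n)) hq ih

noncomputable def baseB1 : Polynomial ℝ := linProd [4, 5, 6, 7, 8, 9, 10, 11] * sqQuad 18 82

lemma baseB1_eq : baseB1 = X ^ 10 + C 42 * X ^ 9 + C 556 * X ^ 8 - C 372 * X ^ 7 - C 76923 * X ^ 6 - C 654822 * X ^ 5 - C 50506 * X ^ 4 + C 30131472 * X ^ 3 + C 194872472 * X ^ 2 + C 527544480 * X + C 545529600 := by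
  simp only [baseB1, linProd_cons, linProd_nil, mul_one, sqQuad, map_ofNat]
  ring

lemma baseB1_good : GoodMQ 3 4 := by
  obtain ⟨h1, h2, h3⟩ := factored_props [4, 5, 6, 7, 8, 9, 10, 11] 18 82 (by norm_num)
    (by intro r hr; fin_cases hr <;> norm_num) (by norm_num)
  refine ⟨baseB1, h1, by simpa [baseB1] using h2, ⟨?_, ?_, ?_⟩, by simpa [baseB1] using h3⟩
  · intro j hj
    interval_cases j <;>
      simp only [baseB1_eq, coeff_add, coeff_sub, coeff_C_mul, coeff_X_pow, coeff_X,
        coeff_C] <;> norm_num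
  · intro j hj1 hj2
    interval_cases j <;>
      simp only [baseB1_eq, coeff_add, coeff_sub, coeff_C_mul, coeff_X_pow, coeff_X,
        coeff_C] <;> norm_num
  · intro j hj1 hj2
    interval_cases j <;>
      simp only [baseB1_eq, coeff_add, coeff_sub, coeff_C_mul, coeff_X_pow, coeff_X,
        coeff_C] <;> norm_num


noncomputable def baseB2 : Polynomial ℝ := linProd [6, 7, 8, 9, 10, 11, 13, 15] * sqQuad 15 57

lemma baseB2_eq : baseB2 = X ^ 10 + C 64 * X ^ 9 + C 1570 * X ^ 8 + C 16063 * X ^ 7 - C 6935 * X ^ 6 - C 1661474 * X ^ 5 - C 12981780 * X ^ 4 - C 2665473 * X ^ 3 + C 446840424 * X ^ 2 + C 2281140900 * X + C 3697293600 := by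
  simp only [baseB2, linProd_cons, linProd_nil, mul_one, sqQuad, map_ofNat]
  ring

lemma baseB2_good : GoodMQ 4 3 := by
  obtain ⟨h1, h2, h3⟩ := factored_props [6, 7, 8, 9, 10, 11, 13, 15] 15 57 (by norm_num)
    (by intro r hr; fin_cases hr <;> norm_num) (by norm_num)
  refine ⟨baseB2, h1, by simpa [baseB2] using h2, ⟨?_, ?_, ?_⟩, by simpa [baseB2] using h3⟩
  · intro j hj
    interval_cases j <;>
      simp only [baseB2_eq, coeff_add, coeff_sub, coeff_C_mul, coeff_X_pow, coeff_X,
        coeff_C] <;> norm_num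
  · intro j hj1 hj2
    interval_cases j <;>
      simp only [baseB2_eq, coeff_add, coeff_sub, coeff_C_mul, coeff_X_pow, coeff_X,
        coeff_C] <;> norm_num
  · intro j hj1 hj2
    interval_cases j <;>
      simp only [baseB2_eq, coeff_add, coeff_sub, coeff_C_mul, coeff_X_pow, coeff_X,
        coeff_C] <;> norm_num


noncomputable def baseB3 : Polynomial ℝ := linProd [8, 9, 10, 11, 13, 14, 17, 19, 22] * sqQuad 62 962

lemma baseB3_eq : baseB3 = X ^ 11 + C 61 * X ^ 10 - C 32 * X ^ 9 - C 87100 * X ^ 8 - C 2328527 * X ^ 7 - C 669207 * X ^ 6 + C 1092148154 * X ^ 5 + C 25155163070 * X ^ 4 + C 287251183076 * X ^ 3 + C 1864184889496 * X ^ 2 + C 6580582765328 * X + C 9853643479680 := by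
  simp only [baseB3, linProd_cons, linProd_nil, mul_one, sqQuad, map_ofNat]
  ring

lemma baseB3_good : GoodMQ 2 6 := by
  obtain ⟨h1, h2, h3⟩ := factored_props [8, 9, 10, 11, 13, 14, 17, 19, 22] 62 962 (by norm_num)
    (by intro r hr; fin_cases hr <;> norm_num) (by norm_num)
  refine ⟨baseB3, h1, by simpa [baseB3] using h2, ⟨?_, ?_, ?_⟩, by simpa [baseB3] using h3⟩
  · intro j hj
    interval_cases j <;>
      simp only [baseB3_eq, coeff_add, coeff_sub, coeff_C_mul, coeff_X_pow, coeff_X,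
        coeff_C] <;> norm_num
  · intro j hj1 hj2
    interval_cases j <;>
      simp only [baseB3_eq, coeff_add, coeff_sub, coeff_C_mul, coeff_X_pow, coeff_X,
        coeff_C] <;> norm_num
  · intro j hj1 hj2
    interval_cases j <;>
      simp only [baseB3_eq, coeff_add, coeff_sub, coeff_C_mul, coeff_X_pow, coeff_X,
        coeff_C] <;> norm_num

/-- For `n = 4`, the sign pattern `Σ_{m,4,q}` is realizable with the pair
`(0, d - 2)` if `q ≥ 3`, `m ≥ 3` and `d ≥ 10`, or if `m = 2` and `q ≥ 6`. -/
theorem stmt5 (d m q : ℕ) (hsum : m + 4 + q = d + 1)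
    (h : (3 ≤ q ∧ 3 ≤ m ∧ 10 ≤ d) ∨ (m = 2 ∧ 6 ≤ q)) :
    ∃ P : Polynomial ℝ, P.Monic ∧ P.natDegree = d ∧
      definesSigma P d 4 q ∧ realizesPair P 0 (d - 2) := by
  have hd : d = m + q + 3 := by omega
  subst hd
  have hgood : GoodMQ m q := by
    rcases h with ⟨hq3, hm3, hd10⟩ | ⟨hm2, hq6⟩
    · rcases Nat.lt_or_ge q 4 with hq | hq
      · have hq' : q = 3 := by omega
        have hm4 : 4 ≤ m := by omega
        subst hq'
        have h1 := (baseB2_good).iterM (by norm_num) (by norm_num) (m - 4)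
        have he : 4 + (m - 4) = m := by omega
        rwa [he] at h1
      · have h1 := (baseB1_good).iterM (by norm_num) (by norm_num) (m - 3)
        have he : 3 + (m - 3) = m := by omega
        rw [he] at h1
        have h2 := h1.iterQ (by omega) (by norm_num) (q - 4)
        have he2 : 4 + (q - 4) = q := by omega
        rwa [he2] at h2
    · subst hm2
      have h1 := (baseB3_good).iterQ (by norm_num) (by norm_num) (q - 6)
      have he : 6 + (q - 6) = q := by omega
      rwa [he] at h1
  obtain ⟨P, h1, h2, h3, h4⟩ := hgood
  refine ⟨P, h1, h2, h3, ?_⟩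
  have he : m + q + 3 - 2 = m + q + 1 := by omega
  rwa [he]
end

section
/- For m = 1 and n ≥ 4 (with q ≥ 1, 1 + n + q = d + 1), the sign pattern Σ_{1,n,q} is not realizable with the pair (0, d−2). -/
/-!
Write the realizing polynomial as `P = Q * S`, where `Q = ∏ (X - ρ)` runs over its `d - 2`
negative roots and `S = X² + a X + b` has no real roots, so `a² < 4 b`. Reversing the coefficient
order, `P.reverse = W * (1 + a X + b X²)` with `W = ∏ (1 - ρ X)`, whose coefficients
`e₁, e₂, …` are the elementary symmetric functions of the numbers `-ρ > 0`. The coefficients of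
`P` at `x^(d-1)`, `x^(d-3)`, `x^(d-4)` are negative in `Σ_{1,n,q}` with `n ≥ 4`; these are
`e₁ + a`, `e₃ + a e₂ + b e₁` and `e₄ + a e₃ + b e₂`. Together with the Newton-type inequalities
`2 e₂ ≤ e₁²` and `2 e₁ e₃ ≤ e₂² + 2 e₄` this is impossible.
-/

open Polynomial

lemma realizesPair.roots_neg {P : ℝ[X]} {k : ℕ} (h : realizesPair P 0 k) :
    ∀ x ∈ P.roots, x < 0 := by
  intro x hx
  have hnotpos : ¬ 0 < x := Multiset.filter_eq_nil.1 (Multiset.card_eq_zero.1 h.2.1) x hx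
  exact lt_of_le_of_ne (not_lt.1 hnotpos) fun hx0 => h.2.2.2 (hx0 ▸ hx)

lemma realizesPair.card_roots {P : ℝ[X]} {k : ℕ} (h : realizesPair P 0 k) :
    Multiset.card P.roots = k := by
  rw [← h.2.2.1, Multiset.filter_eq_self.2 h.roots_neg]

namespace Polynomial

section Reverse

variable {R : Type*} [CommRing R]

lemma reverse_X_sub_C [Nontrivial R] (ρ : R) : (X - C ρ).reverse = 1 - C ρ * X := by
  rw [reverse, natDegree_X_sub_C, reflect_sub, reflect_C, ← pow_one X, reflect_monomial]
  simp

lemma reverse_multiset_prod_X_sub_C [IsDomain R] (s : Multiset R) :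
    (s.map fun ρ => X - C ρ).prod.reverse = (s.map fun ρ => 1 - C ρ * X).prod := by
  induction s using Multiset.induction_on with
  | empty => simpa using reverse_C (1 : R)
  | cons ρ s ih =>
    simp only [Multiset.map_cons, Multiset.prod_cons]
    rw [reverse_mul_of_domain, reverse_X_sub_C, ih]

lemma natDegree_X_sq_add_C_mul_X_add_C [Nontrivial R] (a b : R) :
    (X ^ 2 + C a * X + C b).natDegree = 2 := by
  simpa using natDegree_quadratic (R := R) (a := 1) (b := a) (c := b) one_ne_zero

lemma reverse_X_sq_add_C_mul_X_add_C [Nontrivial R] (a b : R) :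
    (X ^ 2 + C a * X + C b).reverse = 1 + C a * X + C b * X ^ 2 := by
  rw [reverse, natDegree_X_sq_add_C_mul_X_add_C, reflect_add, reflect_add, reflect_C,
    reflect_monomial, ← pow_one X, reflect_C_mul_X_pow]
  simp

lemma Monic.exists_eq_X_sq_add_C_mul_X_add_C {S : R[X]} (hS : S.Monic) (h : S.natDegree = 2) :
    ∃ a b : R, S = X ^ 2 + C a * X + C b := by
  refine ⟨S.coeff 1, S.coeff 0, ?_⟩
  conv_lhs => rw [hS.as_sum, h]
  simp [Finset.sum_range_succ]
  ring

end Reverse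

lemma coeff_one_mul_quadratic {R : Type*} [CommSemiring R] (W : R[X]) (a b : R) :
    (W * (1 + C a * X + C b * X ^ 2)).coeff 1 = W.coeff 1 + a * W.coeff 0 := by
  simp [mul_add, mul_left_comm W (C _), coeff_mul_X_pow']

lemma coeff_add_two_mul_quadratic {R : Type*} [CommSemiring R] (W : R[X]) (a b : R) (k : ℕ) :
    (W * (1 + C a * X + C b * X ^ 2)).coeff (k + 2)
      = W.coeff (k + 2) + a * W.coeff (k + 1) + b * W.coeff k := by
  simp [mul_add, mul_left_comm W (C _), coeff_mul_X_pow']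

lemma coeff_one_sub_C_mul_X_mul_succ {R : Type*} [CommRing R] (ρ : R) (W : R[X]) (k : ℕ) :
    ((1 - C ρ * X) * W).coeff (k + 1) = W.coeff (k + 1) - ρ * W.coeff k := by
  rw [sub_mul, one_mul, coeff_sub, mul_assoc, coeff_C_mul, coeff_X_mul]

lemma coeff_zero_prod_one_sub_C_mul_X {R : Type*} [CommRing R] (s : Multiset R) :
    (s.map fun ρ => 1 - C ρ * X).prod.coeff 0 = 1 := by
  simp [coeff_zero_multiset_prod]

lemma coeff_mul_nonneg {R : Type*} [CommSemiring R] [PartialOrder R] [IsOrderedRing R]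
    {p q : R[X]} (hp : ∀ k, 0 ≤ p.coeff k) (hq : ∀ k, 0 ≤ q.coeff k) (k : ℕ) :
    0 ≤ (p * q).coeff k := by
  rw [coeff_mul]
  exact Finset.sum_nonneg fun _ _ => mul_nonneg (hp _) (hq _)

lemma coeff_prod_one_sub_C_mul_X_nonneg {s : Multiset ℝ} (hs : ∀ ρ ∈ s, ρ ≤ 0) (k : ℕ) :
    0 ≤ (s.map fun ρ => 1 - C ρ * X).prod.coeff k := by
  refine Multiset.prod_induction (fun p : ℝ[X] => ∀ k, 0 ≤ p.coeff k) _
    (fun _ _ => coeff_mul_nonneg) (fun k => ?_) (fun p hp k => ?_) k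
  · rw [coeff_one]
    split_ifs <;> norm_num
  · obtain ⟨ρ, hρ, rfl⟩ := Multiset.mem_map.1 hp
    have hρ0 := hs ρ hρ
    rcases k with _ | _ | k <;> simp [coeff_one, coeff_X]
    linarith

def NewtonIneqs (W : ℝ[X]) : Prop :=
  2 * W.coeff 2 ≤ W.coeff 1 ^ 2 ∧ 2 * W.coeff 1 * W.coeff 3 ≤ W.coeff 2 ^ 2 + 2 * W.coeff 4

/- Multiplying by `1 - ρ X` increases the two defects `e₁² - 2 e₂` and `e₂² - 2 e₁ e₃ + 2 e₄`
by `ρ²` and `ρ² (e₁² - 2 e₂)` respectively. -/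
lemma NewtonIneqs.one_sub_C_mul_X_mul {W : ℝ[X]} (hW : NewtonIneqs W) (h0 : W.coeff 0 = 1)
    (ρ : ℝ) : NewtonIneqs ((1 - C ρ * X) * W) := by
  obtain ⟨h2, h4⟩ := hW
  simp only [NewtonIneqs, coeff_one_sub_C_mul_X_mul_succ, h0]
  constructor
  · nlinarith [sq_nonneg ρ]
  · nlinarith [mul_nonneg (sq_nonneg ρ) (sub_nonneg.2 h2)]

lemma newtonIneqs_prod_one_sub_C_mul_X (s : Multiset ℝ) :
    NewtonIneqs (s.map fun ρ => 1 - C ρ * X).prod := by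
  induction s using Multiset.induction_on with
  | empty => simp [NewtonIneqs, coeff_one]
  | cons ρ s ih =>
    rw [Multiset.map_cons, Multiset.prod_cons]
    exact ih.one_sub_C_mul_X_mul (coeff_zero_prod_one_sub_C_mul_X s) ρ

/- With `t = -a > e₁` and `4 b > t²`, the bound on `e₄` turns `h4` into `4 e₃ > e₂ (t + e₁)`;
inserting this into `h3` gives `e₂ (3 t - e₁) > t² e₁`, whereas `2 e₂ ≤ e₁²` gives
`2 e₂ (3 t - e₁) - 2 t² e₁ ≤ -e₁ (t - e₁) (2 t - e₁) ≤ 0`. -/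
lemma NewtonIneqs.false_of_coeff_mul_quadratic_neg {W : ℝ[X]} (hW : NewtonIneqs W)
    (h0 : W.coeff 0 = 1) (hW1 : 0 ≤ W.coeff 1) (hW2 : 0 ≤ W.coeff 2) {a b : ℝ}
    (hab : a ^ 2 < 4 * b)
    (h1 : (W * (1 + C a * X + C b * X ^ 2)).coeff 1 < 0)
    (h3 : (W * (1 + C a * X + C b * X ^ 2)).coeff 3 < 0)
    (h4 : (W * (1 + C a * X + C b * X ^ 2)).coeff 4 < 0) : False := by
  rw [coeff_one_mul_quadratic, h0] at h1
  rw [coeff_add_two_mul_quadratic W a b 1] at h3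
  rw [coeff_add_two_mul_quadratic W a b 2] at h4
  obtain ⟨hN2, hN4⟩ := hW
  set e1 := W.coeff 1
  set e2 := W.coeff 2
  set e3 := W.coeff 3
  set e4 := W.coeff 4
  set t := -a with ht
  have hte1 : e1 < t := by linarith
  have hb : t ^ 2 < 4 * b := by rwa [ht, neg_sq]
  have hN4' : 4 * e1 * e3 ≤ e1 ^ 2 * e2 + 4 * e4 := by
    nlinarith [mul_nonneg hW2 (sub_nonneg.2 hN2)]
  have he3 : e2 * (t + e1) < 4 * e3 := by
    have : e2 * (t - e1) * (t + e1) < 4 * (t - e1) * e3 := by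
      nlinarith [mul_nonneg hW2 (sub_nonneg.2 hb.le)]
    nlinarith
  have he2 : t ^ 2 * e1 < e2 * (3 * t - e1) := by
    nlinarith [mul_nonneg hW1 (sub_nonneg.2 hb.le)]
  nlinarith [mul_nonneg (by linarith : (0 : ℝ) ≤ 3 * t - e1) (sub_nonneg.2 hN2),
    mul_nonneg hW1 (mul_nonneg (by linarith : (0 : ℝ) ≤ t - e1) (by linarith : (0 : ℝ) ≤ 2 * t - e1))]

lemma sq_lt_four_mul_of_roots_eq_zero {a b : ℝ} (h : (X ^ 2 + C a * X + C b).roots = 0) :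
    a ^ 2 < 4 * b := by
  by_contra! hab
  obtain ⟨x, hx⟩ := exists_quadratic_eq_zero one_ne_zero
    ⟨√(discrim 1 a b), (Real.mul_self_sqrt (by rw [discrim]; linarith)).symm⟩
  have hne : X ^ 2 + C a * X + C b ≠ 0 :=
    ne_zero_of_natDegree_gt (n := 0) (by rw [natDegree_X_sq_add_C_mul_X_add_C]; norm_num)
  have hroot : (X ^ 2 + C a * X + C b).IsRoot x := by
    simp only [IsRoot, eval_add, eval_pow, eval_mul, eval_C, eval_X]
    linear_combination hx
  simpa [h] using (mem_roots hne).2 hroot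

lemma Monic.exists_reverse_eq_prod_mul_quadratic {P : ℝ[X]} (hP : P.Monic)
    (hdeg : P.natDegree = Multiset.card P.roots + 2) :
    ∃ a b : ℝ, a ^ 2 < 4 * b ∧
      P.reverse = (P.roots.map fun ρ => 1 - C ρ * X).prod * (1 + C a * X + C b * X ^ 2) := by
  obtain ⟨S, hPS, hdegS, hSroots⟩ := P.exists_prod_multiset_X_sub_C_mul
  have hS : S.Monic := (monic_multisetProd_X_sub_C _).of_mul_monic_left (hPS ▸ hP)
  obtain ⟨a, b, rfl⟩ := hS.exists_eq_X_sq_add_C_mul_X_add_C (by omega)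
  refine ⟨a, b, sq_lt_four_mul_of_roots_eq_zero hSroots, ?_⟩
  conv_lhs => rw [← hPS]
  rw [reverse_mul_of_domain, reverse_multiset_prod_X_sub_C, reverse_X_sq_add_C_mul_X_add_C]

end Polynomial

theorem stmt6_general (d n q : ℕ) (hn : 4 ≤ n)
    (hsum : 1 + n + q = d + 1) :
    ¬ ∃ P : Polynomial ℝ, P.Monic ∧ P.natDegree = d ∧
      definesSigma P d n q ∧ realizesPair P 0 (d - 2) := by
  rintro ⟨P, hmon, hdeg, hσ, hreal⟩
  have hroots_nonpos : ∀ ρ ∈ P.roots, ρ ≤ 0 := fun ρ hρ => (hreal.roots_neg ρ hρ).le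
  obtain ⟨a, b, hab, hrev⟩ :=
    hmon.exists_reverse_eq_prod_mul_quadratic (by rw [hreal.card_roots]; omega)
  have hcoeff_neg : ∀ k, 0 < k → k ≤ 4 → P.reverse.coeff k < 0 := fun k hk0 hk4 => by
    rw [coeff_reverse, hdeg, revAt_le (by omega)]
    exact hσ.2.1 _ (by omega) (by omega)
  rw [hrev] at hcoeff_neg
  exact (newtonIneqs_prod_one_sub_C_mul_X P.roots).false_of_coeff_mul_quadratic_neg
    (coeff_zero_prod_one_sub_C_mul_X _) (coeff_prod_one_sub_C_mul_X_nonneg hroots_nonpos 1)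
    (coeff_prod_one_sub_C_mul_X_nonneg hroots_nonpos 2) hab
    (hcoeff_neg 1 (by norm_num) (by norm_num)) (hcoeff_neg 3 (by norm_num) (by norm_num))
    (hcoeff_neg 4 (by norm_num) (by norm_num))

/-- For `m = 1` and `n ≥ 4`, the sign pattern `Σ_{1,n,q}` is not realizable
with the pair `(0, d - 2)`. -/
theorem stmt6 (d n q : ℕ) (hn : 4 ≤ n) (hq : 1 ≤ q)
    (hsum : 1 + n + q = d + 1) :
    ¬ ∃ P : Polynomial ℝ, P.Monic ∧ P.natDegree = d ∧
      definesSigma P d n q ∧ realizesPair P 0 (d - 2) :=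
  stmt6_general d n q hn hsum
end

section
/- Concatenation lemma: suppose monic real polynomials P₁ and P₂ of degrees d₁ and d₂, with all coefficients nonzero, define the sign patterns (+, σ₁) and (+, σ₂) and realize the pairs (pos₁, neg₁) and (pos₂, neg₂) respectively. Then there exists ε₀ > 0 such that for all 0 < ε < ε₀ the polynomial ε^{d₂} P₁(x) P₂(x/ε) realizes the pair (pos₁ + pos₂, neg₁ + neg₂), and it defines the sign pattern (+, σ₁, σ₂) if the last sign of σ₁ is +, and the sign pattern (+, σ₁, −σ₂) if the last sign of σ₁ is −, where −σ₂ is obtained from σ₂ by changing each + into − and vice versa. -/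
/-!
The polynomial `ε ^ d₂ * P₂ (x / ε)` is `P₂.scaleRoots ε`, whose roots are `ε` times those of
`P₂`; they shrink to `0`, so for small `ε > 0` they avoid the (nonzero) roots of `P₁` and keep
their signs. As `ε → 0`, the coefficient of `x ^ j` in `Q = P₁ * P₂.scaleRoots ε` tends to
`P₁.coeff (j - d₂)` when `j ≥ d₂`, while for `j < d₂` it is `ε ^ (d₂ - j)` times a quantity
tending to `P₁.coeff 0 * P₂.coeff j`.
-/

open Polynomial

open Filter Topology

namespace Polynomial

theorem C_pow_natDegree_mul_comp_C_inv_mul_X {K : Type*} [Field K] (q : K[X]) {s : K}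
    (hs : s ≠ 0) : C (s ^ q.natDegree) * q.comp (C s⁻¹ * X) = q.scaleRoots s := by
  ext i
  rw [coeff_C_mul, comp_C_mul_X_coeff, coeff_scaleRoots]
  rcases le_or_gt i q.natDegree with hi | hi
  · rw [pow_sub₀ _ hs hi, inv_pow]
    ring
  · simp [coeff_eq_zero_of_natDegree_lt hi]

section ScaleRoots

variable {R : Type*} [CommSemiring R] (p q : R[X])

theorem coeff_mul_scaleRoots_of_le {j : ℕ} (hj : j ≤ q.natDegree) (s : R) :
    (p * q.scaleRoots s).coeff j = s ^ (q.natDegree - j) * (p.comp (C s * X) * q).coeff j := by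
  simp only [coeff_mul, coeff_scaleRoots, comp_C_mul_X_coeff, Finset.mul_sum]
  refine Finset.sum_congr rfl fun x hx => ?_
  rw [Finset.HasAntidiagonal.mem_antidiagonal] at hx
  rw [show q.natDegree - x.2 = (q.natDegree - j) + x.1 by omega, pow_add]
  ring

variable [TopologicalSpace R] [IsTopologicalSemiring R]

theorem tendsto_coeff_mul_scaleRoots_of_natDegree_le {j : ℕ} (hj : q.natDegree ≤ j) :
    Tendsto (fun s => (p * q.scaleRoots s).coeff j) (𝓝 0)
      (𝓝 (p.coeff (j - q.natDegree) * q.leadingCoeff)) := by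
  have hcont : Continuous fun s => (p * q.scaleRoots s).coeff j := by
    simp only [coeff_mul, coeff_scaleRoots]
    fun_prop
  convert hcont.tendsto 0 using 2
  rw [scaleRoots_zero, smul_eq_C_mul, mul_left_comm, coeff_C_mul, coeff_mul_X_pow', if_pos hj,
    mul_comm]

theorem tendsto_coeff_comp_C_mul_X_mul (j : ℕ) :
    Tendsto (fun s => (p.comp (C s * X) * q).coeff j) (𝓝 0) (𝓝 (p.coeff 0 * q.coeff j)) := by
  have hcont : Continuous fun s => (p.comp (C s * X) * q).coeff j := by
    simp only [coeff_mul, comp_C_mul_X_coeff]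
    fun_prop
  convert hcont.tendsto 0 using 2
  rw [C_0, zero_mul, comp_zero, coeff_C_mul, coeff_zero_eq_eval_zero]

end ScaleRoots

end Polynomial

theorem realizesPair_mul {P R : ℝ[X]} {a b c d : ℕ} (hP : realizesPair P a b)
    (hR : realizesPair R c d) (hPR : P * R ≠ 0) (hdisj : Disjoint P.roots R.roots) :
    realizesPair (P * R) (a + c) (b + d) := by
  obtain ⟨hPnd, hPpos, hPneg, hP0⟩ := hP
  obtain ⟨hRnd, hRpos, hRneg, hR0⟩ := hR
  rw [realizesPair, roots_mul hPR, Multiset.nodup_add, Multiset.filter_add, Multiset.filter_add,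
    Multiset.card_add, Multiset.card_add, Multiset.mem_add]
  exact ⟨⟨hPnd, hRnd, hdisj⟩, by rw [hPpos, hRpos], by rw [hPneg, hRneg], by tauto⟩

theorem realizesPair_scaleRoots {P : ℝ[X]} {a b : ℕ} (hP : realizesPair P a b) {s : ℝ}
    (hs : 0 < s) : realizesPair (P.scaleRoots s) a b := by
  obtain ⟨hnd, hpos, hneg, h0⟩ := hP
  rw [realizesPair, roots_scaleRoots _ hs.ne'.isUnit, Multiset.filter_map, Multiset.filter_map,
    Multiset.card_map, Multiset.card_map]
  refine ⟨hnd.map (mul_right_injective₀ hs.ne'), ?_, ?_, ?_⟩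
  · rwa [Multiset.filter_congr (q := (0 < ·)) fun x _ => by simp [hs]]
  · rwa [Multiset.filter_congr (q := (· < 0)) fun x _ => by simp [mul_neg_iff, hs, hs.not_gt]]
  · simpa [hs.ne'] using h0

theorem eventually_disjoint_roots_map_mul {P : ℝ[X]} (hP0 : (0 : ℝ) ∉ P.roots) (S : Multiset ℝ) :
    ∀ᶠ s in 𝓝 0, Disjoint P.roots (S.map (s * ·)) := by
  classical
  have hne : ∀ r ∈ P.roots.toFinset, ∀ t ∈ S.toFinset, ∀ᶠ s in 𝓝 (0 : ℝ), s * t ≠ r := by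
    intro r hr t _
    have hlim : Tendsto (fun s : ℝ => s * t) (𝓝 0) (𝓝 0) := by
      simpa using (continuous_mul_const t).tendsto 0
    exact hlim.eventually_ne fun h => hP0 (h ▸ Multiset.mem_toFinset.mp hr)
  filter_upwards [(eventually_all_finset _).2 fun r hr => (eventually_all_finset _).2 (hne r hr)]
    with s hs
  rw [Multiset.disjoint_left]
  intro r hr hmap
  obtain ⟨t, ht, rfl⟩ := Multiset.mem_map.mp hmap
  exact hs _ (Multiset.mem_toFinset.mpr hr) t (Multiset.mem_toFinset.mpr ht) rfl

theorem eventually_pos_coeff_mul_scaleRoots_mul_coeff_sub_natDegree (p q : ℝ[X]) {j : ℕ}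
    (hj : q.natDegree ≤ j) (hp : p.coeff (j - q.natDegree) ≠ 0) (hq : 0 < q.leadingCoeff) :
    ∀ᶠ s in 𝓝 0, 0 < (p * q.scaleRoots s).coeff j * p.coeff (j - q.natDegree) := by
  have hlim := (tendsto_coeff_mul_scaleRoots_of_natDegree_le p q hj).mul_const
    (p.coeff (j - q.natDegree))
  have hsq : 0 < p.coeff (j - q.natDegree) * q.leadingCoeff * p.coeff (j - q.natDegree) := by
    rw [mul_right_comm]
    exact mul_pos (mul_self_pos.mpr hp) hq
  exact hlim.eventually (lt_mem_nhds hsq)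

theorem eventually_pos_coeff_mul_scaleRoots_mul_coeff_mul_coeff_zero (p q : ℝ[X]) {j : ℕ}
    (hj : j ≤ q.natDegree) (hp : p.coeff 0 ≠ 0) (hq : q.coeff j ≠ 0) :
    ∀ᶠ s in 𝓝[>] 0, 0 < (p * q.scaleRoots s).coeff j * q.coeff j * p.coeff 0 := by
  have hlim := ((tendsto_coeff_comp_C_mul_X_mul p q j).mul_const (q.coeff j * p.coeff 0))
  have hsq : 0 < p.coeff 0 * q.coeff j * (q.coeff j * p.coeff 0) := by
    nlinarith [mul_self_pos.mpr (mul_ne_zero hp hq)]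
  filter_upwards [nhdsWithin_le_nhds (hlim.eventually (lt_mem_nhds hsq)), self_mem_nhdsWithin]
    with s hs (hs0 : 0 < s)
  rw [coeff_mul_scaleRoots_of_le p q hj, mul_assoc, mul_assoc]
  exact mul_pos (pow_pos hs0 _) hs

theorem stmt12_general (d₁ d₂ : ℕ) (P₁ P₂ : Polynomial ℝ)
    (h₂ : P₂.Monic) (hdeg₂ : P₂.natDegree = d₂)
    (hnz₁ : ∀ j ≤ d₁, P₁.coeff j ≠ 0) (hnz₂ : ∀ j ≤ d₂, P₂.coeff j ≠ 0)
    (pos₁ neg₁ pos₂ neg₂ : ℕ)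
    (hr₁ : realizesPair P₁ pos₁ neg₁) (hr₂ : realizesPair P₂ pos₂ neg₂) :
    ∃ ε₀ : ℝ, 0 < ε₀ ∧ ∀ ε : ℝ, 0 < ε → ε < ε₀ →
      ∀ Q : Polynomial ℝ,
        Q = Polynomial.C (ε ^ d₂) * P₁ *
              (P₂.comp (Polynomial.C ε⁻¹ * Polynomial.X)) →
        realizesPair Q (pos₁ + pos₂) (neg₁ + neg₂) ∧
        (∀ j : ℕ, d₂ ≤ j → j ≤ d₁ + d₂ → 0 < Q.coeff j * P₁.coeff (j - d₂)) ∧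
        (0 < P₁.coeff 0 → ∀ j < d₂, 0 < Q.coeff j * P₂.coeff j) ∧
        (P₁.coeff 0 < 0 → ∀ j < d₂, Q.coeff j * P₂.coeff j < 0) := by
  subst hdeg₂
  have hP₁ : P₁ ≠ 0 := fun h => hnz₁ 0 d₁.zero_le (by rw [h, coeff_zero])
  have hsmall : ∀ᶠ ε in 𝓝[>] 0, Disjoint P₁.roots (P₂.roots.map (ε * ·)) ∧
      (∀ j ∈ Finset.Icc P₂.natDegree (d₁ + P₂.natDegree),
        0 < (P₁ * P₂.scaleRoots ε).coeff j * P₁.coeff (j - P₂.natDegree)) ∧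
      ∀ j ∈ Finset.range P₂.natDegree,
        0 < (P₁ * P₂.scaleRoots ε).coeff j * P₂.coeff j * P₁.coeff 0 := by
    refine ((eventually_disjoint_roots_map_mul hr₁.2.2.2 _).filter_mono nhdsWithin_le_nhds).and
      (.and (((eventually_all_finset _).2 fun j hj => ?_).filter_mono nhdsWithin_le_nhds)
        ((eventually_all_finset _).2 fun j hj => ?_))
    · rw [Finset.mem_Icc] at hj
      exact eventually_pos_coeff_mul_scaleRoots_mul_coeff_sub_natDegree P₁ P₂ hj.1
        (hnz₁ _ (by omega)) (h₂.leadingCoeff ▸ one_pos)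
    · rw [Finset.mem_range] at hj
      exact eventually_pos_coeff_mul_scaleRoots_mul_coeff_mul_coeff_zero P₁ P₂ hj.le
        (hnz₁ 0 d₁.zero_le) (hnz₂ j hj.le)
  obtain ⟨ε₀, hε₀, hsub⟩ := mem_nhdsGT_iff_exists_Ioo_subset.mp hsmall
  refine ⟨ε₀, hε₀, fun ε hε hεε₀ Q hQ => ?_⟩
  obtain ⟨hdisj, hhigh, hlow⟩ := hsub ⟨hε, hεε₀⟩
  rw [mul_right_comm, C_pow_natDegree_mul_comp_C_inv_mul_X _ hε.ne', mul_comm] at hQ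
  subst hQ
  refine ⟨?_, fun j hj hj' => hhigh j (Finset.mem_Icc.mpr ⟨hj, hj'⟩),
    fun h0 j hj => (pos_iff_pos_of_mul_pos (hlow j (Finset.mem_range.mpr hj))).mpr h0,
    fun h0 j hj => (neg_iff_neg_of_mul_pos (hlow j (Finset.mem_range.mpr hj))).mpr h0⟩
  exact realizesPair_mul hr₁ (realizesPair_scaleRoots hr₂ hε)
    (mul_ne_zero hP₁ (scaleRoots_ne_zero h₂.ne_zero _)) (by rwa [roots_scaleRoots _ hε.ne'.isUnit])

/-- Concatenation lemma. `P₁`, `P₂` are monic of degrees `d₁`, `d₂`, with all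
coefficients nonzero (so each defines a sign pattern `(+, σᵢ)`), realizing the
pairs `(pos₁, neg₁)`, `(pos₂, neg₂)`. Then for all sufficiently small `ε > 0`
the polynomial `Q(x) = ε^{d₂} P₁(x) P₂(x/ε)` realizes `(pos₁+pos₂, neg₁+neg₂)`;
its sign pattern agrees with that of `P₁` on the coefficients of `x^j`,
`d₂ ≤ j ≤ d₁+d₂` (the part `(+, σ₁)`), and on the lower coefficients it agrees
with that of `P₂` if the last sign of `σ₁` (the sign of `P₁.coeff 0`) is `+`,
and is opposite to it if that sign is `−`. -/
theorem stmt12 (d₁ d₂ : ℕ) (P₁ P₂ : Polynomial ℝ)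
    (h₁ : P₁.Monic) (hdeg₁ : P₁.natDegree = d₁)
    (h₂ : P₂.Monic) (hdeg₂ : P₂.natDegree = d₂)
    (hnz₁ : ∀ j ≤ d₁, P₁.coeff j ≠ 0) (hnz₂ : ∀ j ≤ d₂, P₂.coeff j ≠ 0)
    (pos₁ neg₁ pos₂ neg₂ : ℕ)
    (hr₁ : realizesPair P₁ pos₁ neg₁) (hr₂ : realizesPair P₂ pos₂ neg₂) :
    ∃ ε₀ : ℝ, 0 < ε₀ ∧ ∀ ε : ℝ, 0 < ε → ε < ε₀ →
      ∀ Q : Polynomial ℝ,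
        Q = Polynomial.C (ε ^ d₂) * P₁ *
              (P₂.comp (Polynomial.C ε⁻¹ * Polynomial.X)) →
        realizesPair Q (pos₁ + pos₂) (neg₁ + neg₂) ∧
        (∀ j : ℕ, d₂ ≤ j → j ≤ d₁ + d₂ → 0 < Q.coeff j * P₁.coeff (j - d₂)) ∧
        (0 < P₁.coeff 0 → ∀ j < d₂, 0 < Q.coeff j * P₂.coeff j) ∧
        (P₁.coeff 0 < 0 → ∀ j < d₂, Q.coeff j * P₂.coeff j < 0) :=
  stmt12_general d₁ d₂ P₁ P₂ h₂ hdeg₂ hnz₁ hnz₂ pos₁ neg₁ pos₂ neg₂ hr₁ hr₂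
end

section
/- For every integer d ≥ 3 and all positive real numbers a₁, …, a_d, one has e₁²e₂ + 4e₄ > 4e₁e₃, where e_j denotes the j-th elementary symmetric polynomial in a₁, …, a_d (with e₄ = 0 when d = 3). -/
/-- The `j`-th elementary symmetric polynomial of the numbers `a 0, …, a (d-1)`:
the sum over all `j`-element subsets of the products of the corresponding
values (so `esymm a j = 0` when `j > d`). -/
def esymm {d : ℕ} (a : Fin d → ℝ) (j : ℕ) : ℝ :=
  ∑ s ∈ Finset.powersetCard j (Finset.univ : Finset (Fin d)), ∏ i ∈ s, a i

namespace Stmt13Aux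

open Finset

variable {ι : Type*} [DecidableEq ι]

/-- Elementary symmetric function over an arbitrary finset. -/
def E (f : ι → ℝ) (s : Finset ι) (j : ℕ) : ℝ :=
  ∑ t ∈ s.powersetCard j, ∏ i ∈ t, f i

lemma E_zero (f : ι → ℝ) (s : Finset ι) : E f s 0 = 1 := by
  simp [E]

lemma E_one (f : ι → ℝ) (s : Finset ι) : E f s 1 = ∑ i ∈ s, f i := by
  rw [E, powersetCard_one, Finset.sum_map]
  simp

lemma E_empty (f : ι → ℝ) (j : ℕ) : E f (∅ : Finset ι) (j + 1) = 0 := by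
  rw [E, Finset.powersetCard_eq_empty.2 (by simp)]
  simp

lemma E_insert (f : ι → ℝ) {x : ι} {s : Finset ι} (h : x ∉ s) (j : ℕ) :
    E f (insert x s) (j + 1) = E f s (j + 1) + f x * E f s j := by
  rw [E, powersetCard_succ_insert h, Finset.sum_union, Finset.sum_image]
  · rw [E, E, Finset.mul_sum]
    congr 1
    refine Finset.sum_congr rfl fun t ht => ?_
    have hxt : x ∉ t := fun hx => h ((Finset.mem_powersetCard.1 ht).1 hx)
    rw [Finset.prod_insert hxt]
  · intro t₁ h₁ t₂ h₂ heq
    have hx₁ : x ∉ t₁ := fun hx => h ((Finset.mem_powersetCard.1 h₁).1 hx)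
    have hx₂ : x ∉ t₂ := fun hx => h ((Finset.mem_powersetCard.1 h₂).1 hx)
    calc t₁ = (insert x t₁).erase x := by rw [Finset.erase_insert hx₁]
      _ = (insert x t₂).erase x := by rw [heq]
      _ = t₂ := Finset.erase_insert hx₂
  · rw [Finset.disjoint_left]
    intro t ht ht'
    obtain ⟨u, hu, rfl⟩ := Finset.mem_image.1 ht'
    exact h ((Finset.mem_powersetCard.1 ht).1 (Finset.mem_insert_self x u))

/-- The key pair of polynomial identities, proved by induction on the finset. -/
lemma key (f : ι → ℝ) (s : Finset ι) :
    (E f s 1) ^ 2 = (∑ i ∈ s, f i ^ 2) + 2 * E f s 2 ∧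
    (E f s 1) ^ 2 * E f s 2 + 4 * E f s 4 - 4 * E f s 1 * E f s 3
      = E f s 2 * (∑ i ∈ s, f i ^ 2) + 2 * E (fun i => f i ^ 2) s 2 := by
  induction s using Finset.induction_on with
  | empty => simp [E_empty, E_one]
  | @insert x s hx ih =>
    obtain ⟨h1, h2⟩ := ih
    have e1 : E f (insert x s) 1 = E f s 1 + f x := by
      rw [show (1 : ℕ) = 0 + 1 from rfl, E_insert f hx, E_zero]; ring
    have e2 : E f (insert x s) 2 = E f s 2 + f x * E f s 1 := E_insert f hx 1
    have e3 : E f (insert x s) 3 = E f s 3 + f x * E f s 2 := E_insert f hx 2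
    have e4 : E f (insert x s) 4 = E f s 4 + f x * E f s 3 := E_insert f hx 3
    have q2 : E (fun i => f i ^ 2) (insert x s) 2
        = E (fun i => f i ^ 2) s 2 + f x ^ 2 * E (fun i => f i ^ 2) s 1 :=
      E_insert (fun i => f i ^ 2) hx 1
    have q1 : E (fun i => f i ^ 2) s 1 = ∑ i ∈ s, f i ^ 2 := E_one _ s
    rw [Finset.sum_insert hx]
    constructor
    · rw [e1, e2]; linear_combination h1
    · rw [e1, e2, e3, e4, q2, q1]
      linear_combination h2 + (f x * E f s 1 + 2 * f x ^ 2) * h1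

end Stmt13Aux

/-- For every `d ≥ 3` and positive reals `a₁, …, a_d`, one has
`e₁² e₂ + 4 e₄ > 4 e₁ e₃` (with `e₄ = 0` when `d = 3`). -/
theorem stmt13 (d : ℕ) (hd : 3 ≤ d) (a : Fin d → ℝ) (ha : ∀ i, 0 < a i) :
    4 * esymm a 1 * esymm a 3 < (esymm a 1) ^ 2 * esymm a 2 + 4 * esymm a 4 := by
  open Stmt13Aux in
  have hE : ∀ j, esymm a j = E a Finset.univ j := fun j => rfl
  obtain ⟨h1, h2⟩ := Stmt13Aux.key a (Finset.univ : Finset (Fin d))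
  have hcard : (Finset.univ : Finset (Fin d)).card = d := Finset.card_univ.trans (Fintype.card_fin d)
  have hp2 : 0 < ∑ i : Fin d, a i ^ 2 := by
    apply Finset.sum_pos (fun i _ => pow_pos (ha i) 2)
    rw [← Finset.card_pos, hcard]; omega
  have he2 : 0 < Stmt13Aux.E a Finset.univ 2 := by
    apply Finset.sum_pos
    · intro t ht
      exact Finset.prod_pos fun i _ => ha i
    · exact Finset.powersetCard_nonempty.2 (by omega)
  have hq2 : 0 ≤ Stmt13Aux.E (fun i => a i ^ 2) Finset.univ 2 := by
    apply Finset.sum_nonneg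
    intro t ht
    exact Finset.prod_nonneg fun i _ => sq_nonneg _
  rw [hE 1, hE 2, hE 3, hE 4]
  nlinarith [mul_pos he2 hp2]
end

section
/- Let d ≥ 4, let u₁, …, u_{d−2} be positive reals, and set P(x) = (x−a)² ∏_{i=1}^{d−2}(x + u_i), regarded for each fixed x-power as a function of a. Write ∏_{i=1}^{d−2}(x+u_i) = Σ_{j=0}^{d−2} r_j x^j. Then for each j with 2 ≤ j ≤ d−2, the coefficient of x^j in P equals the quadratic polynomial a²r_j − 2a r_{j−1} + r_{j−2} in a, which has positive leading coefficient and two distinct positive real roots (equivalently, r_{j−1}² > r_j r_{j−2}). -/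
open Polynomial


lemma coeff_step (v : ℝ) (Q : Polynomial ℝ) (k : ℕ) :
    ((X + C v) * Q).coeff (k + 1) = Q.coeff k + v * Q.coeff (k + 1) := by
  simp [add_mul, coeff_X_mul, coeff_C_mul]

lemma coeff_step0 (v : ℝ) (Q : Polynomial ℝ) :
    ((X + C v) * Q).coeff 0 = v * Q.coeff 0 := by
  simp [add_mul, coeff_C_mul, coeff_X_mul_zero]

lemma aux {ι : Type*} [DecidableEq ι] (u : ι → ℝ) (s : Finset ι)
    (hu : ∀ i ∈ s, 0 < u i) :
    (∀ k ≤ s.card, 0 < (∏ i ∈ s, (X + C (u i))).coeff k) ∧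
    (∀ k, s.card < k → (∏ i ∈ s, (X + C (u i))).coeff k = 0) ∧
    (∀ k, (∏ i ∈ s, (X + C (u i))).coeff (k+2) * (∏ i ∈ s, (X + C (u i))).coeff k
        ≤ (∏ i ∈ s, (X + C (u i))).coeff (k+1) ^ 2) ∧
    (∀ k, k + 2 ≤ s.card →
      (∏ i ∈ s, (X + C (u i))).coeff (k+2) * (∏ i ∈ s, (X + C (u i))).coeff k
        < (∏ i ∈ s, (X + C (u i))).coeff (k+1) ^ 2) := by
  classical
  induction s using Finset.induction_on with
  | empty =>
    simp only [Finset.prod_empty, Finset.card_empty]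
    refine ⟨?_, ?_, ?_, ?_⟩ <;> intro k
    · intro hk
      interval_cases k
      simp
    · intro hk
      rw [coeff_one, if_neg (by omega)]
    · rcases k with _ | k <;> simp [coeff_one]
    · intro hk; omega
  | @insert a t ha ih =>
    have hua : 0 < u a := hu a (Finset.mem_insert_self a t)
    obtain ⟨hA, hB, hC, hD⟩ := ih (fun i hi => hu i (Finset.mem_insert_of_mem hi))
    set Q : Polynomial ℝ := ∏ i ∈ t, (X + C (u i)) with hQ
    have hprod : ∏ i ∈ insert a t, (X + C (u i)) = (X + C (u a)) * Q :=
      Finset.prod_insert ha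
    rw [hprod, Finset.card_insert_of_notMem ha]
    -- nonnegativity of all coefficients of Q
    have hN : ∀ k, 0 ≤ Q.coeff k := by
      intro k
      rcases le_or_gt k t.card with h | h
      · exact (hA k h).le
      · exact le_of_eq (hB k h).symm
    -- consecutive inequality
    have hconsec : ∀ k, Q.coeff (k+3) * Q.coeff k ≤ Q.coeff (k+1) * Q.coeff (k+2) := by
      intro k
      rcases le_or_gt (k + 2) t.card with h | h
      · have hb : 0 < Q.coeff (k+1) := hA _ (by omega)
        have hc : 0 < Q.coeff (k+2) := hA _ h
        have h1 := hC k
        have h2 := hC (k+1)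
        have hnn := hN k
        have hnn3 := hN (k+3)
        nlinarith [mul_pos hb hc, mul_nonneg hnn3 hnn]
      · have : Q.coeff (k+3) = 0 := hB _ (by omega)
        rw [this, zero_mul]
        exact mul_nonneg (hN _) (hN _)
    -- new positivity
    have hA' : ∀ k ≤ t.card + 1, 0 < ((X + C (u a)) * Q).coeff k := by
      intro k hk
      rcases k with _ | k
      · rw [coeff_step0]; exact mul_pos hua (hA 0 (Nat.zero_le _))
      · rw [coeff_step]
        have h1 : 0 < Q.coeff k := hA k (by omega)
        have h2 : 0 ≤ u a * Q.coeff (k+1) := mul_nonneg hua.le (hN _)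
        linarith
    -- new vanishing
    have hB' : ∀ k, t.card + 1 < k → ((X + C (u a)) * Q).coeff k = 0 := by
      intro k hk
      rcases k with _ | k
      · omega
      · rw [coeff_step, hB k (by omega), hB (k+1) (by omega)]; ring
    refine ⟨hA', hB', ?_, ?_⟩
    · -- weak log-concavity
      intro k
      rcases k with _ | k
      · rw [coeff_step0, coeff_step, coeff_step]
        have h1 := hC 0
        have h0 := hA 0 (Nat.zero_le _)
        have hnn1 := hN 1
        norm_num at h1 ⊢
        nlinarith [mul_nonneg hua.le (mul_nonneg h0.le hnn1),
          mul_nonneg (sq_nonneg (u a)) (sub_nonneg.mpr h1), pow_pos h0 2]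
      · rw [coeff_step, coeff_step, coeff_step]
        have h1 := hC k
        have h2 := hC (k+1)
        have h3 := hconsec k
        nlinarith [sq_nonneg (u a), hua.le]
    · -- strict log-concavity
      intro k hk
      rcases k with _ | k
      · rw [coeff_step0, coeff_step, coeff_step]
        have h1 := hC 0
        have h0 := hA 0 (Nat.zero_le _)
        have hnn1 := hN 1
        norm_num at h1 ⊢
        nlinarith [mul_nonneg hua.le (mul_nonneg h0.le hnn1),
          mul_nonneg (sq_nonneg (u a)) (sub_nonneg.mpr h1), pow_pos h0 2]
      · rw [coeff_step, coeff_step, coeff_step]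
        have h1 := hD k (by omega)
        have h2 := hC (k+1)
        have h3 := hconsec k
        nlinarith [sq_nonneg (u a), hua.le]


/-- Let `d ≥ 4`, let `u₁, …, u_{d-2}` be positive reals, `R = ∏ (x + uᵢ)` with
coefficients `r_j = R.coeff j`, and `P = (x - a)² R`. Then for `2 ≤ j ≤ d - 2`,
the coefficient of `x^j` in `P` equals `a² r_j − 2a r_{j−1} + r_{j−2}`, a
quadratic in `a` with positive leading coefficient and two distinct positive
real roots (equivalently `r_{j−1}² > r_j r_{j−2}`). -/
theorem stmt15 (d : ℕ) (hd : 4 ≤ d) (u : Fin (d - 2) → ℝ) (hu : ∀ i, 0 < u i)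
    (R : Polynomial ℝ) (hR : R = ∏ i, (Polynomial.X + Polynomial.C (u i)))
    (j : ℕ) (hj1 : 2 ≤ j) (hj2 : j ≤ d - 2) :
    (∀ a : ℝ, ((Polynomial.X - Polynomial.C a) ^ 2 * R).coeff j
        = a ^ 2 * R.coeff j - 2 * a * R.coeff (j - 1) + R.coeff (j - 2)) ∧
    0 < R.coeff j ∧
    R.coeff j * R.coeff (j - 2) < (R.coeff (j - 1)) ^ 2 ∧
    ∃ x y : ℝ, 0 < x ∧ x < y ∧
      x ^ 2 * R.coeff j - 2 * x * R.coeff (j - 1) + R.coeff (j - 2) = 0 ∧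
      y ^ 2 * R.coeff j - 2 * y * R.coeff (j - 1) + R.coeff (j - 2) = 0 := by
  obtain ⟨k, rfl⟩ : ∃ k, j = k + 2 := ⟨j - 2, by omega⟩
  simp only [show k + 2 - 1 = k + 1 from rfl, show k + 2 - 2 = k from rfl]
  obtain ⟨hA, hB, hC, hD⟩ := aux u Finset.univ (fun i _ => hu i)
  have hcard : (Finset.univ : Finset (Fin (d - 2))).card = d - 2 := by simp
  rw [hcard] at hA hD
  rw [← hR] at hA hB hC hD
  have hAp : 0 < R.coeff (k + 2) := hA (k + 2) (by omega)
  have hBp : 0 < R.coeff (k + 1) := hA (k + 1) (by omega)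
  have hCp : 0 < R.coeff k := hA k (by omega)
  have hNewt : R.coeff (k + 2) * R.coeff k < R.coeff (k + 1) ^ 2 := hD k (by omega)
  refine ⟨?_, hAp, hNewt, ?_⟩
  · intro a
    have h2 : (X - C a) ^ 2 * R = C (a ^ 2) * R - C (2 * a) * (X * R) + X ^ 2 * R := by
      simp only [C_mul, C_pow, map_ofNat]
      ring
    have c1 : (X ^ 2 * R).coeff (k + 2) = R.coeff k := coeff_X_pow_mul R 2 k
    have c2 : (X * R).coeff (k + 2) = R.coeff (k + 1) := by
      rw [show k + 2 = k + 1 + 1 from rfl, coeff_X_mul]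
    rw [h2, coeff_add, coeff_sub, coeff_C_mul, coeff_C_mul, c1, c2]
    try ring
  · set A := R.coeff (k + 2) with hAdef
    set B := R.coeff (k + 1) with hBdef
    set Cc := R.coeff k with hCdef
    set s : ℝ := Real.sqrt (B ^ 2 - A * Cc) with hsdef
    have hsq : s ^ 2 = B ^ 2 - A * Cc := Real.sq_sqrt (by nlinarith)
    have hsp : 0 < s := Real.sqrt_pos.mpr (by nlinarith)
    have hsB : s < B := by nlinarith
    refine ⟨(B - s) / A, (B + s) / A, div_pos (by linarith) hAp, ?_, ?_, ?_⟩
    · rw [div_lt_div_iff₀ hAp hAp]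
      nlinarith
    · field_simp
      nlinarith [hsq]
    · field_simp
      nlinarith [hsq]
end

section
/- Let P(x) = (x+1)⁷(x−a)² with a ≥ 0, and write P(x) = Σ_{j=0}^{9} p_j x^j. Then it is not the case that both p₃ < 0 and p₆ < 0, and it is not the case that both p₄ < 0 and p₇ < 0. Explicitly, p₃ = 7 − 42a + 35a², p₄ = 21 − 70a + 35a², p₆ = 35 − 42a + 7a², p₇ = 21 − 14a + a², and for no a ≥ 0 are both members of either couple negative. -/
open Polynomial

/-- For `P(x) = (x+1)⁷(x−a)²` with `a ≥ 0`: `p₃ = 7 − 42a + 35a²`,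
`p₄ = 21 − 70a + 35a²`, `p₆ = 35 − 42a + 7a²`, `p₇ = 21 − 14a + a²`, and it is
never the case that both `p₃ < 0` and `p₆ < 0`, nor that both `p₄ < 0` and
`p₇ < 0`. -/
theorem stmt16 (a : ℝ) (ha : 0 ≤ a) (P : Polynomial ℝ)
    (hP : P = (Polynomial.X + 1) ^ 7 * (Polynomial.X - Polynomial.C a) ^ 2) :
    P.coeff 3 = 7 - 42 * a + 35 * a ^ 2 ∧
    P.coeff 4 = 21 - 70 * a + 35 * a ^ 2 ∧
    P.coeff 6 = 35 - 42 * a + 7 * a ^ 2 ∧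
    P.coeff 7 = 21 - 14 * a + a ^ 2 ∧
    ¬(P.coeff 3 < 0 ∧ P.coeff 6 < 0) ∧
    ¬(P.coeff 4 < 0 ∧ P.coeff 7 < 0) := by
  have hexp : P = Polynomial.C (a ^ 2) + Polynomial.C (-2 * a + 7 * a ^ 2) * X +
      Polynomial.C (1 - 14 * a + 21 * a ^ 2) * X ^ 2 +
      Polynomial.C (7 - 42 * a + 35 * a ^ 2) * X ^ 3 +
      Polynomial.C (21 - 70 * a + 35 * a ^ 2) * X ^ 4 +
      Polynomial.C (35 - 70 * a + 21 * a ^ 2) * X ^ 5 +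
      Polynomial.C (35 - 42 * a + 7 * a ^ 2) * X ^ 6 +
      Polynomial.C (21 - 14 * a + a ^ 2) * X ^ 7 +
      Polynomial.C (7 - 2 * a) * X ^ 8 + X ^ 9 := by
    rw [hP]
    simp only [map_sub, map_add, map_mul, map_pow, map_one, map_ofNat, map_neg]
    ring_nf
  have h3 : P.coeff 3 = 7 - 42 * a + 35 * a ^ 2 := by
    rw [hexp]; simp only [coeff_add, coeff_C_mul, coeff_X_pow, coeff_C, coeff_X, coeff_one]; norm_num
  have h4 : P.coeff 4 = 21 - 70 * a + 35 * a ^ 2 := by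
    rw [hexp]; simp only [coeff_add, coeff_C_mul, coeff_X_pow, coeff_C, coeff_X, coeff_one]; norm_num
  have h6 : P.coeff 6 = 35 - 42 * a + 7 * a ^ 2 := by
    rw [hexp]; simp only [coeff_add, coeff_C_mul, coeff_X_pow, coeff_C, coeff_X, coeff_one]; norm_num
  have h7 : P.coeff 7 = 21 - 14 * a + a ^ 2 := by
    rw [hexp]; simp only [coeff_add, coeff_C_mul, coeff_X_pow, coeff_C, coeff_X, coeff_one]; norm_num
  refine ⟨h3, h4, h6, h7, ?_, ?_⟩
  · rintro ⟨u, v⟩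
    rw [h3] at u; rw [h6] at v
    nlinarith [sq_nonneg (a - 1)]
  · rintro ⟨u, v⟩
    rw [h4] at u; rw [h7] at v
    nlinarith [sq_nonneg (4 * a - 7)]
end

section
/- Let P(x) = (x+1)⁶(x+w)(x−a)² with w > 0 and a ∈ ℝ, and write P(x) = Σ_{j=0}^{9} p_j x^j. Then it is not the case that both p₃ < 0 and p₆ < 0, and it is not the case that both p₄ < 0 and p₇ < 0. Explicitly, p₃ = 1 + 6w − 12a − 30wa + 15a² + 20wa², p₄ = 6 + 15w − 30a − 40wa + 20a² + 15wa², p₆ = 20 + 15w − 30a − 12wa + 6a² + wa², p₇ = 15 + 6w − 12a − 2wa + a². -/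
open Polynomial

/-- For `P(x) = (x+1)⁶(x+w)(x−a)²` with `w > 0`, `a ∈ ℝ`:
`p₃ = 1 + 6w − 12a − 30wa + 15a² + 20wa²`,
`p₄ = 6 + 15w − 30a − 40wa + 20a² + 15wa²`,
`p₆ = 20 + 15w − 30a − 12wa + 6a² + wa²`,
`p₇ = 15 + 6w − 12a − 2wa + a²`, and it is never the case that both `p₃ < 0`
and `p₆ < 0`, nor that both `p₄ < 0` and `p₇ < 0`. -/
theorem stmt17 (w a : ℝ) (hw : 0 < w) (P : Polynomial ℝ)
    (hP : P = (Polynomial.X + 1) ^ 6 * (Polynomial.X + Polynomial.C w) *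
      (Polynomial.X - Polynomial.C a) ^ 2) :
    P.coeff 3 = 1 + 6 * w - 12 * a - 30 * w * a + 15 * a ^ 2 + 20 * w * a ^ 2 ∧
    P.coeff 4 = 6 + 15 * w - 30 * a - 40 * w * a + 20 * a ^ 2 + 15 * w * a ^ 2 ∧
    P.coeff 6 = 20 + 15 * w - 30 * a - 12 * w * a + 6 * a ^ 2 + w * a ^ 2 ∧
    P.coeff 7 = 15 + 6 * w - 12 * a - 2 * w * a + a ^ 2 ∧
    ¬(P.coeff 3 < 0 ∧ P.coeff 6 < 0) ∧
    ¬(P.coeff 4 < 0 ∧ P.coeff 7 < 0) := by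
  have hexp : P = C (w*a^2) + C (a^2 - 2*a*w + 6*w*a^2) * X
      + C (w - 2*a + 6*a^2 - 12*a*w + 15*w*a^2) * X^2
      + C (1 + 6*w - 12*a + 15*a^2 - 30*a*w + 20*w*a^2) * X^3
      + C (6 + 15*w - 30*a + 20*a^2 - 40*a*w + 15*w*a^2) * X^4
      + C (15 + 20*w - 40*a + 15*a^2 - 30*a*w + 6*w*a^2) * X^5
      + C (20 + 15*w - 30*a + 6*a^2 - 12*a*w + w*a^2) * X^6
      + C (15 + 6*w - 12*a + a^2 - 2*a*w) * X^7
      + C (6 + w - 2*a) * X^8 + X^9 := by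
    rw [hP]
    simp only [map_add, map_sub, map_mul, map_pow, map_one, map_ofNat]
    ring
  have h3 : P.coeff 3 = 1 + 6 * w - 12 * a - 30 * w * a + 15 * a ^ 2 + 20 * w * a ^ 2 := by
    rw [hexp]
    simp only [coeff_add, coeff_C_mul, coeff_X_pow, coeff_C, coeff_X]
    norm_num; ring
  have h4 : P.coeff 4 = 6 + 15 * w - 30 * a - 40 * w * a + 20 * a ^ 2 + 15 * w * a ^ 2 := by
    rw [hexp]
    simp only [coeff_add, coeff_C_mul, coeff_X_pow, coeff_C, coeff_X]
    norm_num; ring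
  have h6 : P.coeff 6 = 20 + 15 * w - 30 * a - 12 * w * a + 6 * a ^ 2 + w * a ^ 2 := by
    rw [hexp]
    simp only [coeff_add, coeff_C_mul, coeff_X_pow, coeff_C, coeff_X]
    norm_num; ring
  have h7 : P.coeff 7 = 15 + 6 * w - 12 * a - 2 * w * a + a ^ 2 := by
    rw [hexp]
    simp only [coeff_add, coeff_C_mul, coeff_X_pow, coeff_C, coeff_X]
    norm_num; ring
  refine ⟨h3, h4, h6, h7, ?_, ?_⟩
  · rintro ⟨ha, hb⟩
    rw [h3] at ha; rw [h6] at hb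
    nlinarith [sq_nonneg (a-1), sq_nonneg (a*w), sq_nonneg a, mul_pos hw hw,
      sq_nonneg (a*w - w), sq_nonneg (a-2), sq_nonneg (a*w-2*w)]
  · rintro ⟨ha, hb⟩
    rw [h4] at ha; rw [h7] at hb
    nlinarith [mul_pos hw hw, mul_neg_of_pos_of_neg hw hb, sq_nonneg (a-1),
      sq_nonneg (a-2), sq_nonneg (a-3), sq_nonneg (a*w-w), sq_nonneg (a*w-2*w),
      sq_nonneg (a*w-3*w), sq_nonneg (a-1-w), sq_nonneg (w*(a-2)-1)]
end

section
/- Let P(x) = (x+1)⁷(x+w)(x−a)² with w > 0 and a ∈ ℝ, and write P(x) = Σ_{j=0}^{10} p_j x^j. Then it is not the case that both p₅ < 0 and p₈ < 0, where p₅ = 21 + 35w − 70a − 70wa + 35a² + 21wa² and p₈ = 21 + 7w − 14a − 2wa + a². -/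
open Polynomial

/-- For `P(x) = (x+1)⁷(x+w)(x−a)²` with `w > 0`, `a ∈ ℝ`:
`p₅ = 21 + 35w − 70a − 70wa + 35a² + 21wa²` and
`p₈ = 21 + 7w − 14a − 2wa + a²`, and it is never the case that both `p₅ < 0`
and `p₈ < 0`. -/
theorem stmt18 (w a : ℝ) (hw : 0 < w) (P : Polynomial ℝ)
    (hP : P = (Polynomial.X + 1) ^ 7 * (Polynomial.X + Polynomial.C w) *
      (Polynomial.X - Polynomial.C a) ^ 2) :
    P.coeff 5 = 21 + 35 * w - 70 * a - 70 * w * a + 35 * a ^ 2 + 21 * w * a ^ 2 ∧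
    P.coeff 8 = 21 + 7 * w - 14 * a - 2 * w * a + a ^ 2 ∧
    ¬(P.coeff 5 < 0 ∧ P.coeff 8 < 0) := by
  have hP' : P =
      C (w * a ^ 2) +
      C (a ^ 2 - 2 * w * a + 7 * w * a ^ 2) * X +
      C (-2 * a + 7 * a ^ 2 + w - 14 * w * a + 21 * w * a ^ 2) * X ^ 2 +
      C (1 - 14 * a + 21 * a ^ 2 + 7 * w - 42 * w * a + 35 * w * a ^ 2) * X ^ 3 +
      C (7 - 42 * a + 35 * a ^ 2 + 21 * w - 70 * w * a + 35 * w * a ^ 2) * X ^ 4 +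
      C (21 - 70 * a + 35 * a ^ 2 + 35 * w - 70 * w * a + 21 * w * a ^ 2) * X ^ 5 +
      C (35 - 70 * a + 21 * a ^ 2 + 35 * w - 42 * w * a + 7 * w * a ^ 2) * X ^ 6 +
      C (35 - 42 * a + 7 * a ^ 2 + 21 * w - 14 * w * a + w * a ^ 2) * X ^ 7 +
      C (21 - 14 * a + a ^ 2 + 7 * w - 2 * w * a) * X ^ 8 +
      C (7 - 2 * a + w) * X ^ 9 +
      X ^ 10 := by
    rw [hP]
    simp only [C_add, C_sub, C_mul, C_pow, C_neg, C_1, map_ofNat]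
    ring
  have h5 : P.coeff 5 = 21 + 35 * w - 70 * a - 70 * w * a + 35 * a ^ 2 + 21 * w * a ^ 2 := by
    rw [hP']
    simp only [coeff_add, coeff_C_mul, coeff_X_pow, coeff_X, coeff_C]
    norm_num
    ring
  have h8 : P.coeff 8 = 21 + 7 * w - 14 * a - 2 * w * a + a ^ 2 := by
    rw [hP']
    simp only [coeff_add, coeff_C_mul, coeff_X_pow, coeff_X, coeff_C]
    norm_num
    ring
  refine ⟨h5, h8, ?_⟩
  rintro ⟨h1, h2⟩
  rw [h5] at h1; rw [h8] at h2
  nlinarith [mul_nonneg (le_of_lt hw) (sq_nonneg (a - 2)), sq_nonneg (a - 2)]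
end

section
/- Let d ≥ 4 and for integers k with 1 ≤ k ≤ d−3 define δ_k := C(d−2,k)² − C(d−2,k−1)·C(d−2,k+1) and Q^±(k) := (C(d−2,k) ± √δ_k)/C(d−2,k−1), where C(n,j) denotes the binomial coefficient. Then: (i) δ_k = ((d−2)!/((d−k−1)!(k+1)!))² · (k+1)(d−1)(d−k−1) > 0; (ii) Q^±(k) = ((d−k−1)/k)·(1 ± A(k)) with A(k) = √((d−1)/((k+1)(d−k−1))); and (iii) both Q^+(k) and Q^−(k) are strictly decreasing functions of k for k = 1, 2, …, ⌊d/2⌋. -/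
/-- `δ_k := C(d−2,k)² − C(d−2,k−1)·C(d−2,k+1)`. -/
noncomputable def deltaQ (d k : ℕ) : ℝ :=
  (Nat.choose (d - 2) k : ℝ) ^ 2 -
    (Nat.choose (d - 2) (k - 1) : ℝ) * (Nat.choose (d - 2) (k + 1) : ℝ)

/-- `Q⁺(k) := (C(d−2,k) + √δ_k)/C(d−2,k−1)`. -/
noncomputable def Qplus (d k : ℕ) : ℝ :=
  ((Nat.choose (d - 2) k : ℝ) + Real.sqrt (deltaQ d k)) /
    (Nat.choose (d - 2) (k - 1) : ℝ)

/-- `Q⁻(k) := (C(d−2,k) − √δ_k)/C(d−2,k−1)`. -/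
noncomputable def Qminus (d k : ℕ) : ℝ :=
  ((Nat.choose (d - 2) k : ℝ) - Real.sqrt (deltaQ d k)) /
    (Nat.choose (d - 2) (k - 1) : ℝ)

/-- `A(k) = √((d−1)/((k+1)(d−k−1)))`. -/
noncomputable def Afun (d k : ℕ) : ℝ :=
  Real.sqrt (((d : ℝ) - 1) / (((k : ℝ) + 1) * ((d : ℝ) - (k : ℝ) - 1)))

lemma delta_formula (a t : ℕ) :
    deltaQ (a+t+4) (a+1) =
      ((Nat.factorial (a+t+2) : ℝ) /
        ((Nat.factorial (t+2) : ℝ) * (Nat.factorial (a+2) : ℝ)))^2 *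
        (((a:ℝ)+2) * (((a:ℝ)+(t:ℝ))+3) * ((t:ℝ)+2)) := by
  unfold deltaQ
  have h1 : a+t+4 - 2 = a+t+2 := by omega
  have h2 : a+1 - 1 = a := by omega
  rw [h1, h2,
    Nat.cast_choose ℝ (by omega : a+1 ≤ a+t+2),
    Nat.cast_choose ℝ (by omega : a ≤ a+t+2),
    Nat.cast_choose ℝ (by omega : a+1+1 ≤ a+t+2)]
  simp only [show a+t+2-(a+1) = t+1 from by omega, show a+t+2-a = t+2 from by omega,
    show a+t+2-(a+1+1) = t from by omega, show a+1+1 = a+2 from rfl]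
  have e1 : (Nat.factorial (a+2) : ℝ) = ((a:ℝ)+2) * ((a:ℝ)+1) * (Nat.factorial a) := by
    push_cast [Nat.factorial_succ]; ring
  have e2 : (Nat.factorial (a+1) : ℝ) = ((a:ℝ)+1) * (Nat.factorial a) := by
    push_cast [Nat.factorial_succ]; ring
  have e3 : (Nat.factorial (t+2) : ℝ) = ((t:ℝ)+2) * ((t:ℝ)+1) * (Nat.factorial t) := by
    push_cast [Nat.factorial_succ]; ring
  have e4 : (Nat.factorial (t+1) : ℝ) = ((t:ℝ)+1) * (Nat.factorial t) := by
    push_cast [Nat.factorial_succ]; ring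
  rw [e1, e2, e3, e4]
  have ha : (Nat.factorial a : ℝ) ≠ 0 := by positivity
  have ht : (Nat.factorial t : ℝ) ≠ 0 := by positivity
  have h1 : ((a:ℝ)+1) ≠ 0 := by positivity
  have h2 : ((t:ℝ)+1) ≠ 0 := by positivity
  field_simp
  ring

lemma delta_pos (a t : ℕ) : 0 < deltaQ (a+t+4) (a+1) := by
  rw [delta_formula]; positivity

lemma Q_formula (a t : ℕ) :
    Qplus (a+t+4) (a+1) = (((t:ℝ)+2)/((a:ℝ)+1)) * (1 + Afun (a+t+4) (a+1)) ∧
    Qminus (a+t+4) (a+1) = (((t:ℝ)+2)/((a:ℝ)+1)) * (1 - Afun (a+t+4) (a+1)) := by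
  have h1 : a+t+4 - 2 = a+t+2 := by omega
  have h2 : a+1 - 1 = a := by omega
  have hCa : (0:ℝ) < (Nat.choose (a+t+2) a : ℝ) := by
    exact_mod_cast Nat.choose_pos (by omega)
  have hCk : (Nat.choose (a+t+2) (a+1) : ℝ) = (Nat.factorial (a+t+2) : ℝ) /
      ((Nat.factorial (a+1) : ℝ) * (Nat.factorial (t+1) : ℝ)) := by
    rw [Nat.cast_choose ℝ (by omega : a+1 ≤ a+t+2),
      show a+t+2-(a+1) = t+1 from by omega]
  have hCav : (Nat.choose (a+t+2) a : ℝ) = (Nat.factorial (a+t+2) : ℝ) /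
      ((Nat.factorial a : ℝ) * (Nat.factorial (t+2) : ℝ)) := by
    rw [Nat.cast_choose ℝ (by omega : a ≤ a+t+2),
      show a+t+2-a = t+2 from by omega]
  have e2 : (Nat.factorial (a+1) : ℝ) = ((a:ℝ)+1) * (Nat.factorial a) := by
    push_cast [Nat.factorial_succ]; ring
  have e3 : (Nat.factorial (t+2) : ℝ) = ((t:ℝ)+2) * (Nat.factorial (t+1)) := by
    push_cast [Nat.factorial_succ]; ring
  have ha : (Nat.factorial a : ℝ) ≠ 0 := by positivity
  have ht : (Nat.factorial (t+1) : ℝ) ≠ 0 := by positivity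
  have hat : (Nat.factorial (a+t+2) : ℝ) ≠ 0 := by positivity
  have hratio : (Nat.choose (a+t+2) (a+1) : ℝ) / (Nat.choose (a+t+2) a : ℝ)
      = ((t:ℝ)+2)/((a:ℝ)+1) := by
    rw [hCk, hCav, e2, e3]
    field_simp
  have hA : Afun (a+t+4) (a+1) =
      Real.sqrt ((((a:ℝ)+(t:ℝ))+3) / ((((a:ℝ)+2)) * ((t:ℝ)+2))) := by
    unfold Afun
    congr 1
    push_cast
    ring_nf
  have hsq : Real.sqrt (deltaQ (a+t+4) (a+1)) / (Nat.choose (a+t+2) a : ℝ)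
      = (((t:ℝ)+2)/((a:ℝ)+1)) * Afun (a+t+4) (a+1) := by
    rw [hA]
    have hd0 : 0 ≤ deltaQ (a+t+4) (a+1) := (delta_pos a t).le
    rw [show (((t:ℝ)+2)/((a:ℝ)+1)) * Real.sqrt ((((a:ℝ)+(t:ℝ))+3) / ((((a:ℝ)+2)) * ((t:ℝ)+2)))
        = Real.sqrt ((((t:ℝ)+2)/((a:ℝ)+1))^2 * ((((a:ℝ)+(t:ℝ))+3) / ((((a:ℝ)+2)) * ((t:ℝ)+2))))
      from by rw [Real.sqrt_mul (by positivity), Real.sqrt_sq (by positivity)]]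
    rw [show Real.sqrt (deltaQ (a+t+4) (a+1)) / (Nat.choose (a+t+2) a : ℝ)
        = Real.sqrt (deltaQ (a+t+4) (a+1) / ((Nat.choose (a+t+2) a : ℝ))^2)
      from by rw [Real.sqrt_div hd0, Real.sqrt_sq hCa.le]]
    congr 1
    rw [delta_formula, hCav, e3]
    have e1 : (Nat.factorial (a+2) : ℝ) = ((a:ℝ)+2) * ((a:ℝ)+1) * (Nat.factorial a) := by
      push_cast [Nat.factorial_succ]; ring
    rw [e1]
    field_simp
  constructor
  · show ((Nat.choose (a+t+4-2) (a+1) : ℝ) + Real.sqrt (deltaQ (a+t+4) (a+1))) /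
      (Nat.choose (a+t+4-2) (a+1-1) : ℝ) = _
    rw [h1, h2, add_div, hratio, hsq]
    ring
  · show ((Nat.choose (a+t+4-2) (a+1) : ℝ) - Real.sqrt (deltaQ (a+t+4) (a+1))) /
      (Nat.choose (a+t+4-2) (a+1-1) : ℝ) = _
    rw [h1, h2, sub_div, hratio, hsq]
    ring

set_option maxHeartbeats 1000000 in
lemma coreQ (x D A1 A2 : ℝ) (hx : 1 ≤ x) (hD : 2*x+2 ≤ D)
    (hA1 : A1 = Real.sqrt ((D-1)/((x+1)*(D-x-1))))
    (hA2 : A2 = Real.sqrt ((D-1)/((x+2)*(D-x-2)))) :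
    ((D-x-2)/(x+1))*(1+A2) < ((D-x-1)/x)*(1+A1) ∧
    ((D-x-2)/(x+1))*(1-A2) < ((D-x-1)/x)*(1-A1) := by
  have hx0 : (0:ℝ) < x := by linarith
  have h2 : (0:ℝ) < D-x-2 := by linarith
  have h1 : (0:ℝ) < D-x-1 := by linarith
  have h3 : (0:ℝ) ≤ D-x-3 := by linarith
  have hm : (0:ℝ) < D-1 := by linarith
  have hA1sq : A1^2 = (D-1)/((x+1)*(D-x-1)) := by
    rw [hA1, Real.sq_sqrt (div_nonneg hm.le (by nlinarith))]
  have hA2sq : A2^2 = (D-1)/((x+2)*(D-x-2)) := by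
    rw [hA2, Real.sq_sqrt (div_nonneg hm.le (by nlinarith))]
  have hA1nn : 0 ≤ A1 := hA1 ▸ Real.sqrt_nonneg _
  have hA2nn : 0 ≤ A2 := hA2 ▸ Real.sqrt_nonneg _
  constructor
  · have hBA : ((D-x-2)/(x+1))*A2 < ((D-x-1)/x)*A1 := by
      apply lt_of_pow_lt_pow_left₀ 2 (by positivity)
      rw [mul_pow, mul_pow, hA1sq, hA2sq, div_pow, div_pow,
        div_mul_div_comm, div_mul_div_comm, div_lt_div_iff₀ (by positivity) (by positivity)]
      nlinarith [mul_pos h1 h2, mul_pos hx0 h1, mul_pos (mul_pos hm h2) (mul_pos hx0 h1),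
        mul_pos hm (mul_pos h1 h2), sq_nonneg x, mul_pos hm h1]
    have hB : (D-x-2)/(x+1) < (D-x-1)/x := by
      rw [div_lt_div_iff₀ (by positivity) hx0]
      nlinarith
    nlinarith [hBA, hB]
  · have hone1 : (0:ℝ) < 1 + A1 := by linarith
    have hone2 : (0:ℝ) < 1 + A2 := by linarith
    have hid1 : ((D-x-1)/x)*(1-A1) = ((D-x-2)/(x+1))/(1+A1) := by
      rw [eq_div_iff (ne_of_gt hone1)]
      have h := hA1sq
      field_simp at h ⊢
      nlinarith [h]
    have hid2 : ((D-x-2)/(x+1))*(1-A2) = ((D-x-3)/(x+2))/(1+A2) := by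
      rw [eq_div_iff (ne_of_gt hone2)]
      have h := hA2sq
      field_simp at h ⊢
      nlinarith [h]
    rw [hid1, hid2, div_lt_div_iff₀ hone2 hone1]
    have hB' : (D-x-3)/(x+2) < (D-x-2)/(x+1) := by
      rw [div_lt_div_iff₀ (by positivity) (by positivity)]
      nlinarith
    have hBA' : ((D-x-3)/(x+2))*A1 ≤ ((D-x-2)/(x+1))*A2 := by
      apply le_of_pow_le_pow_left₀ two_ne_zero (by positivity)
      rw [mul_pow, mul_pow, hA1sq, hA2sq, div_pow, div_pow,
        div_mul_div_comm, div_mul_div_comm, div_le_div_iff₀ (by positivity) (by positivity)]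
      have hsmall : (D-x-3)^2*(x+1) ≤ (D-x-2)*(D-x-1)*(x+2) := by nlinarith [h3, hx0]
      have hfac : (0:ℝ) ≤ (D-1)*((x+1)*(x+2))*(D-x-2) :=
        mul_nonneg (mul_nonneg hm.le (by positivity)) h2.le
      nlinarith [mul_le_mul_of_nonneg_left hsmall hfac]
    nlinarith [hB', hBA', hA1nn, hA2nn]

/-- For `d ≥ 4` and `1 ≤ k ≤ d − 3`:
(i) `δ_k = ((d−2)!/((d−k−1)!(k+1)!))² (k+1)(d−1)(d−k−1) > 0`;
(ii) `Q^±(k) = ((d−k−1)/k)(1 ± A(k))`;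
(iii) `Q⁺` and `Q⁻` are strictly decreasing in `k` for `k = 1, …, ⌊d/2⌋`. -/
theorem stmt19 (d : ℕ) (hd : 4 ≤ d) :
    (∀ k : ℕ, 1 ≤ k → k ≤ d - 3 →
      deltaQ d k =
        ((Nat.factorial (d - 2) : ℝ) /
            ((Nat.factorial (d - 1 - k) : ℝ) * (Nat.factorial (k + 1) : ℝ))) ^ 2 *
          (((k : ℝ) + 1) * ((d : ℝ) - 1) * ((d : ℝ) - (k : ℝ) - 1)) ∧
      0 < deltaQ d k) ∧
    (∀ k : ℕ, 1 ≤ k → k ≤ d - 3 →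
      Qplus d k = (((d : ℝ) - (k : ℝ) - 1) / (k : ℝ)) * (1 + Afun d k) ∧
      Qminus d k = (((d : ℝ) - (k : ℝ) - 1) / (k : ℝ)) * (1 - Afun d k)) ∧
    (∀ k : ℕ, 1 ≤ k → k + 1 ≤ d / 2 →
      Qplus d (k + 1) < Qplus d k ∧ Qminus d (k + 1) < Qminus d k) := by
  refine ⟨?_, ?_, ?_⟩
  · intro k hk1 hk2
    obtain ⟨a, rfl⟩ : ∃ a, k = a + 1 := ⟨k-1, by omega⟩
    obtain ⟨t, rfl⟩ : ∃ t, d = a+t+4 := ⟨d-a-4, by omega⟩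
    refine ⟨?_, delta_pos a t⟩
    rw [delta_formula]
    simp only [show a+t+4-2 = a+t+2 from by omega, show a+t+4-1-(a+1) = t+2 from by omega]
    push_cast
    ring
  · intro k hk1 hk2
    obtain ⟨a, rfl⟩ : ∃ a, k = a + 1 := ⟨k-1, by omega⟩
    obtain ⟨t, rfl⟩ : ∃ t, d = a+t+4 := ⟨d-a-4, by omega⟩
    constructor
    · rw [(Q_formula a t).1]
      push_cast
      ring
    · rw [(Q_formula a t).2]
      push_cast
      ring
  · intro k hk1 hk2
    by_cases hd4 : d = 4
    · subst hd4
      have hk : k = 1 := by omega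
      subst hk
      have h1 : deltaQ 4 1 = 3 := by norm_num [deltaQ]
      have h2 : deltaQ 4 2 = 1 := by norm_num [deltaQ]
      have hs3 : Real.sqrt 3 < 2 := by
        nlinarith [Real.sq_sqrt (by norm_num : (0:ℝ) ≤ 3), Real.sqrt_nonneg (3:ℝ)]
      have hs3' : 0 ≤ Real.sqrt 3 := Real.sqrt_nonneg _
      constructor
      · show ((Nat.choose 2 2 : ℝ) + Real.sqrt (deltaQ 4 2)) / (Nat.choose 2 1 : ℝ) <
          ((Nat.choose 2 1 : ℝ) + Real.sqrt (deltaQ 4 1)) / (Nat.choose 2 0 : ℝ)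
        rw [h1, h2, Real.sqrt_one]
        norm_num
        nlinarith
      · show ((Nat.choose 2 2 : ℝ) - Real.sqrt (deltaQ 4 2)) / (Nat.choose 2 1 : ℝ) <
          ((Nat.choose 2 1 : ℝ) - Real.sqrt (deltaQ 4 1)) / (Nat.choose 2 0 : ℝ)
        rw [h1, h2, Real.sqrt_one]
        norm_num
        nlinarith
    · -- d ≥ 5
      obtain ⟨a, rfl⟩ : ∃ a, k = a + 1 := ⟨k-1, by omega⟩
      obtain ⟨s, rfl⟩ : ∃ s, d = a+s+5 := ⟨d-a-5, by omega⟩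
      have F1 := Q_formula a (s+1)
      rw [show a+(s+1)+4 = a+s+5 from by omega] at F1
      have F2 := Q_formula (a+1) s
      rw [show a+1+s+4 = a+s+5 from by omega] at F2
      have hA1 : Afun (a+s+5) (a+1) =
          Real.sqrt ((((a:ℝ)+(s:ℝ)+5)-1)/((((a:ℝ)+1)+1)*(((a:ℝ)+(s:ℝ)+5)-((a:ℝ)+1)-1))) := by
        unfold Afun; congr 1; push_cast; ring_nf
      have hA2 : Afun (a+s+5) (a+1+1) =
          Real.sqrt ((((a:ℝ)+(s:ℝ)+5)-1)/((((a:ℝ)+1)+2)*(((a:ℝ)+(s:ℝ)+5)-((a:ℝ)+1)-2))) := by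
        unfold Afun; congr 1; push_cast; ring_nf
      have hDx : 2*((a:ℝ)+1)+2 ≤ ((a:ℝ)+(s:ℝ)+5) := by
        have : a ≤ s + 1 := by omega
        have : (a:ℝ) ≤ (s:ℝ) + 1 := by exact_mod_cast this
        linarith
      have H := coreQ ((a:ℝ)+1) ((a:ℝ)+(s:ℝ)+5) (Afun (a+s+5) (a+1)) (Afun (a+s+5) (a+1+1))
        (by linarith [Nat.cast_nonneg (α := ℝ) a]) hDx hA1 hA2
      constructor
      · rw [F1.1, F2.1]
        convert H.1 using 2 <;> push_cast <;> ring
      · rw [F1.2, F2.2]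
        convert H.2 using 2 <;> push_cast <;> ring
end
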